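/- arXiv:2301.06586 — 9 statements merged into one kernel-verified Lean document; each statement's English description precedes it below -/
import Mathlib

section
/- Let F be a field whose characteristic is 0 or strictly larger than n. If there exists a rank-r tensor decomposition of the n × n determinant over F, then there exist scalars c_1,…,c_s ∈ F and linear forms ℓ_1,…,ℓ_s in the n² variables x_{i,j}, with s = 2^{n−1} · r, such that the determinant polynomial det_F^n equals Σ_{k=1}^s c_k · ℓ_k^n. In particular, the Waring rank of det_F^n is at most 2^{n−1} times its tensor rank. -/
/-!
Substituting the generic matrix `(x_{i,j})` into the tensor decomposition writes `det` as a sum of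
`r` products of `n` linear forms; the substitution is legitimate because both sides are multilinear
in the rows and agree on rows taken from the standard basis. Each product is then a combination of
`2^(n-1)` powers of linear forms by Fischer's formula
`2^(n-1) n! y₁ ⋯ yₙ = ∑_{ε ∈ {±1}^(n-1)} ε₁ ⋯ ε_{n-1} (ε₁ y₁ + ⋯ + ε_{n-1} y_{n-1} + yₙ)^n`,
whose left-hand coefficient is invertible under the hypothesis on the characteristic. To prove the
formula, expand the power as a sum over maps `g : Fin n → Fin n`: summing the signs over `ε`
annihilates every `g` having a fibre of even size over some `i < n`, and the maps that survive are
exactly the permutations.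
-/

/-- A rank-`r` tensor decomposition of the `n × n` determinant over `F`. -/
def IsDetDecomposition (F : Type*) [Field F] (n r : ℕ)
    (v : Fin n → Fin r → Fin n → F) : Prop :=
  ∀ A : Matrix (Fin n) (Fin n) F,
    A.det = ∑ k : Fin r, ∏ i : Fin n, ∑ j : Fin n, v i k j * A i j

/-- The determinant polynomial in the `n²` variables `x_{i,j}`. -/
noncomputable def detPoly (F : Type*) [Field F] (n : ℕ) :
    MvPolynomial (Fin n × Fin n) F :=
  ∑ σ : Equiv.Perm (Fin n),
    ((Equiv.Perm.sign σ : ℤ) : F) • ∏ i : Fin n, MvPolynomial.X (i, σ i)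

open Finset Function MvPolynomial
open scoped Nat

section Waring

variable {R : Type*} [CommRing R] {m : ℕ}

def boolSign (b : Bool) : R := if b then 1 else -1

def signVec (ε : Fin m → Bool) : Fin (m + 1) → R := Fin.snoc (fun i => boolSign (ε i)) 1

theorem map_boolSign {S : Type*} [CommRing S] (f : R →+* S) (b : Bool) :
    f (boolSign b) = boolSign b := by
  cases b <;> simp [boolSign]

theorem map_signVec {S : Type*} [CommRing S] (f : R →+* S) (ε : Fin m → Bool) (j : Fin (m + 1)) :
    f (signVec ε j) = signVec ε j := by
  induction j using Fin.lastCases <;> simp [signVec, map_boolSign]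

theorem sum_boolSign_pow (c : ℕ) : ∑ b, (boolSign b : R) ^ c = 1 + (-1) ^ c := by
  simp [boolSign]

theorem prod_comp_eq_prod_pow_card_fiber {ι κ M : Type*} [Fintype ι] [Fintype κ] [DecidableEq κ]
    [CommMonoid M] (g : ι → κ) (f : κ → M) :
    ∏ t, f (g t) = ∏ j, f j ^ #{t | g t = j} := by
  rw [← prod_fiberwise' univ g f]
  exact prod_congr rfl fun j _ => prod_const _

theorem sum_prod_boolSign_mul_prod_signVec_comp (g : Fin (m + 1) → Fin (m + 1)) :
    ∑ ε : Fin m → Bool, (∏ i, boolSign (ε i)) * ∏ t, (signVec ε (g t) : R) =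
      ∏ i : Fin m, (1 + (-1) ^ (#{t | g t = i.castSucc} + 1)) := by
  have hterm (ε : Fin m → Bool) : (∏ i, boolSign (ε i)) * ∏ t, (signVec ε (g t) : R) =
      ∏ i : Fin m, boolSign (ε i) ^ (#{t | g t = i.castSucc} + 1) := by
    rw [prod_comp_eq_prod_pow_card_fiber g, Fin.prod_univ_castSucc]
    simp only [signVec, Fin.snoc_castSucc, Fin.snoc_last, one_pow, mul_one, ← prod_mul_distrib,
      ← pow_succ']
  simp_rw [hterm, ← sum_boolSign_pow]
  rw [Fintype.prod_sum]

theorem bijective_of_odd_card_fiber {g : Fin (m + 1) → Fin (m + 1)}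
    (hg : ∀ i : Fin m, Odd #{t | g t = i.castSucc}) : Bijective g := by
  refine Finite.surjective_iff_bijective.mp fun j => ?_
  by_contra hj
  push Not at hj
  have hempty : #{t | g t = j} = 0 := by simpa [filter_eq_empty_iff] using hj
  induction j using Fin.lastCases with
  | cast i => simpa [hempty] using hg i
  | last =>
    have hcard : m + 1 = ∑ i : Fin m, #{t | g t = i.castSucc} := by
      simpa [Fin.sum_univ_castSucc, hempty] using
        card_eq_sum_card_fiberwise (s := univ) (t := univ) (f := g) fun _ _ => mem_univ _
    have := congr((($hcard : ℕ) : ZMod 2))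
    simp [ZMod.natCast_eq_one_iff_odd.mpr (hg _)] at this

theorem card_fiber_of_bijective {ι κ : Type*} [Fintype ι] [DecidableEq κ] {g : ι → κ}
    (hg : Bijective g) (j : κ) : #{t | g t = j} = 1 := by
  obtain ⟨a, rfl⟩ := hg.2 j
  rw [card_eq_one]
  exact ⟨a, by ext t; simp [hg.1.eq_iff]⟩

theorem sum_prod_boolSign_mul_prod_signVec_comp_eq_ite (g : Fin (m + 1) → Fin (m + 1)) :
    ∑ ε : Fin m → Bool, (∏ i, boolSign (ε i)) * ∏ t, (signVec ε (g t) : R) =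
      if Bijective g then 2 ^ m else 0 := by
  rw [sum_prod_boolSign_mul_prod_signVec_comp]
  split_ifs with hg
  · norm_num [card_fiber_of_bijective hg]
  · obtain ⟨i, hi⟩ : ∃ i : Fin m, Even #{t | g t = i.castSucc} := by
      by_contra! h
      exact hg (bijective_of_odd_card_fiber fun i => Nat.not_even_iff_odd.mp (h i))
    exact prod_eq_zero (mem_univ i) (by simp [hi.add_one.neg_one_pow])

theorem card_filter_bijective (α : Type*) [Fintype α] [DecidableEq α] :
    #{g : α → α | Bijective g} = (Fintype.card α)! := by
  rw [← Fintype.card_subtype, Fintype.card_congr (Equiv.bijectiveEquiv (α := α) (β := α)),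
    Fintype.card_perm]

theorem sum_prod_boolSign_mul_sum_signVec_pow (y : Fin (m + 1) → R) :
    ∑ ε : Fin m → Bool, (∏ i, boolSign (ε i)) * (∑ j, signVec ε j * y j) ^ (m + 1) =
      (2 ^ m * (m + 1)! : ℕ) * ∏ j, y j := by
  calc _ = ∑ g : Fin (m + 1) → Fin (m + 1),
        (∑ ε : Fin m → Bool, (∏ i, boolSign (ε i)) * ∏ t, (signVec ε (g t) : R)) *
          ∏ t, y (g t) := by
        simp_rw [Fintype.sum_pow, mul_sum, prod_mul_distrib, sum_mul, mul_assoc]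
        exact sum_comm
    _ = ∑ g : Fin (m + 1) → Fin (m + 1), if Bijective g then 2 ^ m * ∏ j, y j else 0 := by
        refine sum_congr rfl fun g _ => ?_
        rw [sum_prod_boolSign_mul_prod_signVec_comp_eq_ite]
        split_ifs with hg
        · exact congrArg _ (Equiv.prod_comp (Equiv.ofBijective g hg) y)
        · rw [zero_mul]
    _ = _ := by
        rw [← sum_filter, sum_const, card_filter_bijective, Fintype.card_fin, nsmul_eq_mul]
        push_cast
        ring

end Waring

theorem IsDetDecomposition.det_eq {F : Type*} [Field F] {n r : ℕ}
    {v : Fin n → Fin r → Fin n → F} (hv : IsDetDecomposition F n r v)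
    {S : Type*} [CommRing S] [Algebra F S] (A : Matrix (Fin n) (Fin n) S) :
    A.det = ∑ k, ∏ i, ∑ j, algebraMap F S (v i k j) * A i j := by
  suffices h : (Matrix.detRowAlternating : (Fin n → S) [⋀^Fin n]→ₗ[S] S).toMultilinearMap =
      ∑ k, (MultilinearMap.mkPiAlgebra S (Fin n) S).compLinearMap
        fun i => Fintype.linearCombination S fun j => algebraMap F S (v i k j) by
    change Matrix.detRowAlternating.toMultilinearMap (fun i => A i) = _
    rw [h]
    simp [Fintype.linearCombination_apply, mul_comm]
  refine Module.Basis.ext_multilinear (fun _ => Pi.basisFun S (Fin n)) fun f => ?_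
  have hf : (Matrix.of fun i => Pi.single (f i) (1 : F)).map (algebraMap F S) =
      Matrix.of fun i => Pi.single (f i) 1 := by
    ext i j; simp [Pi.single_apply]
  have hbasis := congr(algebraMap F S $(hv (Matrix.of fun i => Pi.single (f i) 1)))
  rw [RingHom.map_det, RingHom.mapMatrix_apply, hf] at hbasis
  simp only [Pi.basisFun_apply, AlternatingMap.coe_multilinearMap]
  refine hbasis.trans ?_
  simp [Fintype.linearCombination_apply, Pi.single_apply]

theorem detPoly_eq_det (F : Type*) [Field F] (n : ℕ) :
    detPoly F n = (Matrix.mvPolynomialX (Fin n) (Fin n) F).det := by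
  rw [← Matrix.det_transpose, Matrix.det_apply, detPoly]
  simp [Units.smul_def, Matrix.mvPolynomialX, smul_eq_C_mul]

theorem IsDetDecomposition.detPoly_eq {F : Type*} [Field F] {n r : ℕ}
    {v : Fin n → Fin r → Fin n → F} (hv : IsDetDecomposition F n r v) :
    detPoly F n = ∑ k, ∏ i, ∑ j, C (v i k j) * X (i, j) := by
  rw [detPoly_eq_det, hv.det_eq]
  rfl

theorem prod_eq_sum_smul_sum_signVec_pow {F S : Type*} [Field F] [CommRing S] [Algebra F S]
    {m : ℕ} (hN : ((2 ^ m * (m + 1)! : ℕ) : F) ≠ 0) (y : Fin (m + 1) → S) :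
    ∏ j, y j = ∑ ε : Fin m → Bool,
      (((2 ^ m * (m + 1)! : ℕ) : F)⁻¹ * ∏ i, boolSign (ε i)) •
        (∑ j, signVec ε j * y j) ^ (m + 1) := by
  simp_rw [mul_smul, ← smul_sum, Algebra.smul_def (∏ i, boolSign _), map_prod, map_boolSign,
    sum_prod_boolSign_mul_sum_signVec_pow, Algebra.smul_def, ← mul_assoc,
    ← map_natCast (algebraMap F S), ← map_mul, inv_mul_cancel₀ hN, map_one, one_mul]

theorem natCast_two_pow_mul_factorial_ne_zero {F : Type*} [Field F] {m p : ℕ} [CharP F p]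
    (hp : p = 0 ∨ m + 1 < p) : ((2 ^ m * (m + 1)! : ℕ) : F) ≠ 0 := by
  rw [Ne, CharP.cast_eq_zero_iff F p]
  rcases hp with rfl | hmp
  · simp [Nat.factorial_ne_zero]
  have hpp : p.Prime := (CharP.char_is_prime_or_zero F p).resolve_right (by omega)
  intro hdvd
  rcases hpp.dvd_mul.mp hdvd with h2 | hfac
  · have hm : m = 0 := by have := Nat.le_of_dvd two_pos (hpp.dvd_of_dvd_pow h2); omega
    subst hm
    exact hpp.one_lt.ne' (Nat.dvd_one.mp h2)
  · exact absurd ((hpp.dvd_factorial).mp hfac) (by omega)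

theorem isHomogeneous_sum_signVec_mul {σ R : Type*} [CommRing R] {m : ℕ} (ε : Fin m → Bool)
    {y : Fin (m + 1) → MvPolynomial σ R} (hy : ∀ j, (y j).IsHomogeneous 1) :
    (∑ j, signVec ε j * y j).IsHomogeneous 1 := by
  refine IsHomogeneous.sum _ _ _ fun j _ => ?_
  simpa [map_signVec] using (hy j).C_mul (signVec ε j : R)

theorem exists_sum_smul_pow_eq_sum_prod {σ F : Type*} [Field F] {m r : ℕ}
    (hN : ((2 ^ m * (m + 1)! : ℕ) : F) ≠ 0) (L : Fin r → Fin (m + 1) → MvPolynomial σ F)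
    (hL : ∀ k i, (L k i).IsHomogeneous 1) :
    ∃ (c : Fin (2 ^ m * r) → F) (ℓ : Fin (2 ^ m * r) → MvPolynomial σ F),
      (∀ q, (ℓ q).IsHomogeneous 1) ∧ ∑ k, ∏ i, L k i = ∑ q, c q • ℓ q ^ (m + 1) := by
  let e : Fin (2 ^ m * r) ≃ (Fin m → Bool) × Fin r := (Fintype.equivFinOfCardEq (by simp)).symm
  refine ⟨fun q => ((2 ^ m * (m + 1)! : ℕ) : F)⁻¹ * ∏ i, boolSign ((e q).1 i),
    fun q => ∑ j, signVec (e q).1 j * L (e q).2 j,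
    fun q => isHomogeneous_sum_signVec_mul _ fun j => hL _ j, ?_⟩
  rw [e.sum_comp (fun p => (((2 ^ m * (m + 1)! : ℕ) : F)⁻¹ * ∏ i, boolSign (p.1 i)) •
    (∑ j, signVec p.1 j * L p.2 j) ^ (m + 1)), Fintype.sum_prod_type, sum_comm]
  simp_rw [prod_eq_sum_smul_sum_signVec_pow hN]

/-- If the `n × n` determinant over a field `F` of characteristic `0` or larger than `n`
has a rank-`r` tensor decomposition, then its Waring rank is at most `2^(n-1) · r`. -/
theorem wrank_det_le_two_pow_mul_trank (F : Type*) [Field F] (n : ℕ) (hn : 0 < n)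
    (p : ℕ) [CharP F p] (hp : p = 0 ∨ n < p)
    (r : ℕ) (v : Fin n → Fin r → Fin n → F) (hv : IsDetDecomposition F n r v) :
    ∃ (c : Fin (2 ^ (n - 1) * r) → F)
      (ℓ : Fin (2 ^ (n - 1) * r) → MvPolynomial (Fin n × Fin n) F),
      (∀ k, (ℓ k).IsHomogeneous 1) ∧
        detPoly F n = ∑ k, c k • (ℓ k) ^ n := by
  obtain ⟨m, rfl⟩ : ∃ m, n = m + 1 := ⟨n - 1, by omega⟩
  rw [hv.detPoly_eq]
  exact exists_sum_smul_pow_eq_sum_prod (natCast_two_pow_mul_factorial_ne_zero hp) _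
    fun k i => IsHomogeneous.sum _ _ _ fun j _ => isHomogeneous_C_mul_X _ _
end

section
/- Let F be a field of characteristic p > 0, let n be a positive integer, and let A be an n × n matrix over F. Then det(A) = Σ_{P ∈ PP(n), |P| ≤ p−1} sgn(P) · |P|! · Π_{i=1}^n t_i(P, A), where for each i the factor t_i(P, A) equals Σ_{j : j ∼_P i, j ≠ i} a_{i,j} if i ∼_P i, and equals a_{i,i} + Σ_{j : j ∼_P j} a_{i,j} if i is not related to itself by ∼_P. -/
/-- `i ∼_P j`: some part of the partial partition `P` contains both `i` and `j`. -/
def PPrel {n : ℕ} (P : Finset (Finset (Fin n))) (i j : Fin n) : Prop :=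
  ∃ S ∈ P, i ∈ S ∧ j ∈ S

/-- A partial partition of `[n]`: a set of pairwise disjoint nonempty subsets of `[n]`. -/
def IsPartialPartition {n : ℕ} (P : Finset (Finset (Fin n))) : Prop :=
  (∀ S ∈ P, S.Nonempty) ∧ ∀ S ∈ P, ∀ T ∈ P, S ≠ T → Disjoint S T

/-!
Expanding each factor `t_i(P, A) = ∑ j ∈ allowed P i, A i j` turns the sum over all partial
partitions into `∑ g, w g * ∏ i, A i (g i)` over maps `g : [n] → [n]`, where `w g` is the total
weight `sgn(P) |P|!` of the partial partitions `P` compatible with `g`. If `x` is not in the range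
of `g`, toggling `x` in the part containing `g x` is a weight-reversing involution, so `w g = 0`.
If `g = σ` is a permutation, the compatible `P` are the partitions of the support of `σ` into
unions of cycles. For a cycle `c` disjoint from `τ`, such a partition for `c * τ` either has the
support of `c` as a part, or arises from one for `τ` by merging that support into one of its
parts; this gives `w (c * τ) = -(-1) ^ |c| * w τ`, whence `w σ = sign σ`. Finally `|P|!` vanishes
in characteristic `p` once `|P| ≥ p`.
-/

open Finset Function
open scoped Classical

section ToggleMem

variable {α : Type*} [DecidableEq α]

def toggleMem (x : α) (S : Finset α) : Finset α :=
  if x ∈ S then S.erase x else insert x S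

lemma mem_toggleMem_of_ne {x j : α} (h : j ≠ x) (S : Finset α) :
    j ∈ toggleMem x S ↔ j ∈ S := by
  unfold toggleMem
  split_ifs <;> simp [h]

lemma toggleMem_involutive (x : α) : Involutive (toggleMem x) := by
  intro S
  by_cases hx : x ∈ S <;> simp [toggleMem, hx]

lemma neg_one_pow_card_toggleMem (x : α) (S : Finset α) :
    (-1 : ℤ) ^ (toggleMem x S).card = -(-1) ^ S.card := by
  by_cases hx : x ∈ S
  · rw [toggleMem, if_pos hx, ← card_erase_add_one hx, pow_succ]
    ring
  · rw [toggleMem, if_neg hx, card_insert_of_notMem hx, pow_succ]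
    ring

def toggleIfMem (a x : α) (S : Finset α) : Finset α :=
  if a ∈ S then toggleMem x S else S

lemma mem_toggleIfMem_of_ne {a x j : α} (h : j ≠ x) (S : Finset α) :
    j ∈ toggleIfMem a x S ↔ j ∈ S := by
  unfold toggleIfMem
  split_ifs
  exacts [mem_toggleMem_of_ne h S, Iff.rfl]

lemma toggleIfMem_involutive {a x : α} (hax : a ≠ x) : Involutive (toggleIfMem a x) := by
  intro S
  by_cases ha : a ∈ S
  · have ha' : a ∈ toggleMem x S := (mem_toggleMem_of_ne hax S).2 ha
    simp only [toggleIfMem, if_pos ha, if_pos ha', toggleMem_involutive x S]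
  · simp only [toggleIfMem, if_neg ha]

end ToggleMem

lemma IsPartialPartition.eq_of_mem_of_mem {n : ℕ} {P : Finset (Finset (Fin n))}
    (hP : IsPartialPartition P) {S T : Finset (Fin n)} (hS : S ∈ P) (hT : T ∈ P) {i : Fin n}
    (hiS : i ∈ S) (hiT : i ∈ T) : S = T := by
  by_contra hne
  exact disjoint_left.1 (hP.2 S hS T hT hne) hiS hiT

lemma IsPartialPartition.eq_of_subset {n : ℕ} {P : Finset (Finset (Fin n))}
    (hP : IsPartialPartition P) {S T : Finset (Fin n)} (hS : S ∈ P) (hT : T ∈ P) (hST : S ⊆ T) :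
    S = T := by
  obtain ⟨i, hi⟩ := hP.1 S hS
  exact hP.eq_of_mem_of_mem hS hT hi (hST hi)

lemma IsPartialPartition.subset {n : ℕ} {P Q : Finset (Finset (Fin n))}
    (hP : IsPartialPartition P) (hQ : Q ⊆ P) : IsPartialPartition Q :=
  ⟨fun S hS => hP.1 S (hQ hS), fun S hS T hT => hP.2 S (hQ hS) T (hQ hT)⟩

lemma IsPartialPartition.insert {n : ℕ} {P : Finset (Finset (Fin n))} {S : Finset (Fin n)}
    (hP : IsPartialPartition P) (hS : S.Nonempty) (hdisj : ∀ T ∈ P, Disjoint S T) :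
    IsPartialPartition (insert S P) := by
  refine ⟨fun T hT => ?_, fun T hT U hU hne => ?_⟩
  · rcases mem_insert.1 hT with rfl | hT
    exacts [hS, hP.1 T hT]
  · rcases mem_insert.1 hT with rfl | hT' <;> rcases mem_insert.1 hU with rfl | hU'
    · exact absurd rfl hne
    · exact hdisj U hU'
    · exact (hdisj T hT').symm
    · exact hP.2 T hT' U hU' hne

namespace Equiv.Perm

lemma mem_of_apply_mem_of_mapsTo {α : Type*} {σ : Perm α} {S : Finset α}
    (hS : Set.MapsTo σ S S) {i : α} (h : σ i ∈ S) : i ∈ S := by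
  have hmap : S.map σ.toEmbedding = S :=
    map_eq_of_subset fun j hj => by
      obtain ⟨k, hk, rfl⟩ := mem_map.1 hj
      exact hS hk
  rw [← hmap, mem_map_equiv] at h
  simpa using h

variable {α : Type*} [DecidableEq α] [Fintype α] {c τ : Perm α}

lemma Disjoint.mul_apply_of_mem_support (hd : c.Disjoint τ) {i : α} (hi : i ∈ c.support) :
    (c * τ) i = c i := by
  rw [mul_apply, notMem_support.1 (hd.mem_imp hi)]

lemma Disjoint.mul_apply_of_notMem_support (hd : c.Disjoint τ) {i : α} (hi : i ∉ c.support) :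
    (c * τ) i = τ i := by
  rw [hd.commute.eq, mul_apply, notMem_support.1 hi]

lemma IsCycle.support_subset_of_mapsTo_mul (hc : c.IsCycle) (hd : c.Disjoint τ) {S : Finset α}
    (hS : Set.MapsTo (c * τ) S S) {x : α} (hxS : x ∈ S) (hxc : x ∈ c.support) :
    c.support ⊆ S := by
  intro y hy
  obtain ⟨k, rfl⟩ := hc.exists_pow_eq (mem_support.1 hxc) (mem_support.1 hy)
  have hpow : ∀ k : ℕ, ((c * τ) ^ k) x ∈ S := fun k => by
    induction k with
    | zero => simpa using hxS
    | succ k ih => rw [pow_succ', mul_apply]; exact hS ih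
  have hτ : (τ ^ k) x = x :=
    pow_apply_eq_self_of_apply_eq_self (notMem_support.1 (hd.mem_imp hxc)) k
  simpa [hd.commute.mul_pow, mul_apply, hτ] using hpow k

end Equiv.Perm

namespace PartialPartition

open Equiv Equiv.Perm

section Weight

variable {α : Type*}

/-- Integer-valued, so that a partition fixed by a weight-reversing involution has weight zero
in every characteristic. -/
def weight (P : Finset (Finset α)) : ℤ :=
  (∏ S ∈ P, (-1) ^ (S.card + 1)) * P.card.factorial

variable [DecidableEq α]

lemma weight_insert {S : Finset α} {P : Finset (Finset α)} (hS : S ∉ P) :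
    weight (insert S P) = (-1) ^ (S.card + 1) * (P.card + 1) * weight P := by
  rw [weight, weight, prod_insert hS, card_insert_of_notMem hS, Nat.factorial_succ]
  push_cast
  ring

lemma weight_insert_union_erase {Q : Finset (Finset α)} {B C : Finset α} (hB : B ∈ Q)
    (hBC : Disjoint B C) (hnot : B ∪ C ∉ Q.erase B) :
    weight (insert (B ∪ C) (Q.erase B)) = (-1) ^ C.card * weight Q := by
  conv_rhs => rw [← insert_erase hB]
  rw [weight_insert hnot, weight_insert (notMem_erase B Q), card_union_of_disjoint hBC]
  ring

def toggle (a x : α) (P : Finset (Finset α)) : Finset (Finset α) :=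
  P.image (toggleIfMem a x)

lemma toggle_toggle {a x : α} (hax : a ≠ x) (P : Finset (Finset α)) :
    toggle a x (toggle a x P) = P := by
  rw [toggle, toggle, image_image, (toggleIfMem_involutive hax).comp_self, image_id]

lemma weight_toggle {a x : α} (hax : a ≠ x) {P : Finset (Finset α)}
    (huniq : ∀ S ∈ P, ∀ T ∈ P, a ∈ S → a ∈ T → S = T) (hex : ∃ S ∈ P, a ∈ S) :
    weight (toggle a x P) = -weight P := by
  have hinj := (toggleIfMem_involutive hax).injective
  have hsign : ∀ S ∈ P, (-1 : ℤ) ^ ((toggleIfMem a x S).card + 1)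
      = (if a ∈ S then -1 else 1) * (-1) ^ (S.card + 1) := by
    intro S _
    by_cases ha : a ∈ S
    · simp only [toggleIfMem, if_pos ha, pow_succ, neg_one_pow_card_toggleMem]
      ring
    · simp only [toggleIfMem, if_neg ha, one_mul]
  rw [weight, weight, toggle, card_image_of_injective _ hinj, prod_image (fun S _ T _ h => hinj h),
    prod_congr rfl hsign, prod_mul_distrib, prod_ite_one P _ huniq, if_pos hex]
  ring

end Weight

variable {n : ℕ}

section Compatible

noncomputable def allowed (P : Finset (Finset (Fin n))) (i : Fin n) : Finset (Fin n) :=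
  if PPrel P i i then univ.filter (fun j => PPrel P j i ∧ j ≠ i)
  else insert i (univ.filter (fun j => PPrel P j j))

variable {P : Finset (Finset (Fin n))} {i j : Fin n}

lemma mem_allowed_of_pprel (hi : PPrel P i i) : j ∈ allowed P i ↔ PPrel P j i ∧ j ≠ i := by
  simp [allowed, hi]

lemma mem_allowed_of_not_pprel (hi : ¬ PPrel P i i) : j ∈ allowed P i ↔ j = i ∨ PPrel P j j := by
  simp [allowed, hi]

lemma sum_allowed {R : Type*} [AddCommMonoid R] (A : Matrix (Fin n) (Fin n) R)
    (P : Finset (Finset (Fin n))) (i : Fin n) :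
    ∑ j ∈ allowed P i, A i j =
      if PPrel P i i then ∑ j ∈ univ.filter (fun j => PPrel P j i ∧ j ≠ i), A i j
      else A i i + ∑ j ∈ univ.filter (fun j => PPrel P j j), A i j := by
  unfold allowed
  split_ifs with hi
  · rfl
  · rw [sum_insert (by simp [hi])]

def IsCompatible (g : Fin n → Fin n) (P : Finset (Finset (Fin n))) : Prop :=
  IsPartialPartition P ∧ ∀ i, g i ∈ allowed P i

variable {g : Fin n → Fin n}

lemma IsCompatible.apply_mem (hg : IsCompatible g P) {S : Finset (Fin n)} (hS : S ∈ P)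
    (hi : i ∈ S) : g i ∈ S ∧ g i ≠ i := by
  obtain ⟨⟨T, hT, hgT, hiT⟩, hne⟩ := (mem_allowed_of_pprel ⟨S, hS, hi, hi⟩).1 (hg.2 i)
  exact ⟨hg.1.eq_of_mem_of_mem hT hS hiT hi ▸ hgT, hne⟩

lemma IsCompatible.pprel_apply {x : Fin n} (hg : IsCompatible g P) (hx : ∀ y, g y ≠ x) :
    PPrel P (g x) (g x) := by
  by_cases hcov : PPrel P x x
  · obtain ⟨S, hS, hxS, -⟩ := hcov
    exact ⟨S, hS, (hg.apply_mem hS hxS).1, (hg.apply_mem hS hxS).1⟩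
  · exact ((mem_allowed_of_not_pprel hcov).1 (hg.2 x)).resolve_left (hx x)

lemma pprel_toggle_iff {a x j k : Fin n} (hj : j ≠ x) (hk : k ≠ x) :
    PPrel (toggle a x P) j k ↔ PPrel P j k := by
  simp [PPrel, toggle, mem_toggleIfMem_of_ne hj, mem_toggleIfMem_of_ne hk]

lemma IsCompatible.mem_of_mem_toggleIfMem {x : Fin n} (hg : IsCompatible g P)
    {S : Finset (Fin n)} (hS : S ∈ P) (h : x ∈ toggleIfMem (g x) x S) : g x ∈ S := by
  by_contra hgx
  rw [toggleIfMem, if_neg hgx] at h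
  exact hgx (hg.apply_mem hS h).1

section NotSurjective

variable {x : Fin n} (hg : IsCompatible g P) (hx : ∀ y, g y ≠ x)
include hg hx

lemma IsCompatible.isPartialPartition_toggle : IsPartialPartition (toggle (g x) x P) := by
  refine ⟨?_, ?_⟩
  · simp only [toggle, mem_image, forall_exists_index, and_imp, forall_apply_eq_imp_iff₂]
    intro S hS
    by_cases hgS : g x ∈ S
    · exact ⟨g x, (mem_toggleIfMem_of_ne (hx x) S).2 hgS⟩
    · simpa [toggleIfMem, hgS] using hg.1.1 S hS
  · simp only [toggle, mem_image, forall_exists_index, and_imp, forall_apply_eq_imp_iff₂]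
    intro S hS T hT hne
    refine disjoint_left.2 fun j hjS hjT => ?_
    have hST : S ≠ T := fun h => hne (h ▸ rfl)
    by_cases hj : j = x
    · subst hj
      exact hST (hg.1.eq_of_mem_of_mem hS hT (hg.mem_of_mem_toggleIfMem hS hjS)
        (hg.mem_of_mem_toggleIfMem hT hjT))
    · rw [mem_toggleIfMem_of_ne hj] at hjS hjT
      exact disjoint_left.1 (hg.1.2 S hS T hT hST) hjS hjT

lemma IsCompatible.toggle : IsCompatible g (toggle (g x) x P) := by
  refine ⟨hg.isPartialPartition_toggle hx, fun i => ?_⟩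
  by_cases hix : i = x
  · subst hix
    by_cases hcov : PPrel (toggle (g i) i P) i i
    · rw [mem_allowed_of_pprel hcov]
      obtain ⟨S', hS', hiS', -⟩ := hcov
      obtain ⟨S, hS, rfl⟩ := mem_image.1 hS'
      have hgS := (mem_toggleIfMem_of_ne (a := g i) (hx i) S).2 (hg.mem_of_mem_toggleIfMem hS hiS')
      exact ⟨⟨_, hS', hgS, hiS'⟩, hx i⟩
    · rw [mem_allowed_of_not_pprel hcov, pprel_toggle_iff (hx i) (hx i)]
      exact Or.inr (hg.pprel_apply hx)
  · by_cases hcov : PPrel P i i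
    · have := (mem_allowed_of_pprel hcov).1 (hg.2 i)
      rwa [mem_allowed_of_pprel ((pprel_toggle_iff hix hix).2 hcov), pprel_toggle_iff (hx i) hix]
    · have := (mem_allowed_of_not_pprel hcov).1 (hg.2 i)
      rwa [mem_allowed_of_not_pprel (mt (pprel_toggle_iff hix hix).1 hcov),
        pprel_toggle_iff (hx i) (hx i)]

end NotSurjective

theorem sum_weight_eq_zero_of_not_surjective (hg : ¬ Surjective g) :
    ∑ P ∈ univ.filter (IsCompatible g), weight P = 0 := by
  obtain ⟨x, hx⟩ : ∃ x, ∀ y, g y ≠ x := by simpa [Surjective] using hg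
  have hweight : ∀ P, IsCompatible g P → weight (toggle (g x) x P) = -weight P := by
    intro P hP
    obtain ⟨S, hS, hgS, -⟩ := hP.pprel_apply hx
    exact weight_toggle (hx x) (fun S hS T hT => hP.1.eq_of_mem_of_mem hS hT) ⟨S, hS, hgS⟩
  refine sum_involution (fun P _ => toggle (g x) x P) (fun P hP => ?_) (fun P hP hw hfix => ?_)
    (fun P hP => ?_) (fun P _ => toggle_toggle (hx x) P)
  · rw [hweight P (mem_filter.1 hP).2, add_neg_cancel]
  · have := hweight P (mem_filter.1 hP).2
    rw [hfix] at this
    omega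
  · exact mem_filter.2 ⟨mem_univ _, (mem_filter.1 hP).2.toggle hx⟩

end Compatible

def IsCycleUnion (σ : Perm (Fin n)) (S : Finset (Fin n)) : Prop :=
  S ⊆ σ.support ∧ Set.MapsTo σ S S

lemma IsCycleUnion.union {σ : Perm (Fin n)} {S T : Finset (Fin n)} (hS : IsCycleUnion σ S)
    (hT : IsCycleUnion σ T) : IsCycleUnion σ (S ∪ T) := by
  rw [IsCycleUnion, coe_union]
  exact ⟨union_subset hS.1 hT.1, hS.2.union_union hT.2⟩

def IsCyclePartition (σ : Perm (Fin n)) (P : Finset (Finset (Fin n))) : Prop :=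
  IsPartialPartition P ∧ (∀ S ∈ P, IsCycleUnion σ S) ∧ ∀ i ∈ σ.support, ∃ S ∈ P, i ∈ S

lemma isCompatible_iff_isCyclePartition (σ : Perm (Fin n)) (P : Finset (Finset (Fin n))) :
    IsCompatible σ P ↔ IsCyclePartition σ P := by
  constructor
  · intro hg
    have hparts : ∀ S ∈ P, IsCycleUnion σ S := fun S hS =>
      ⟨fun i hi => mem_support.2 (hg.apply_mem hS hi).2, fun i hi => (hg.apply_mem hS hi).1⟩
    refine ⟨hg.1, hparts, fun i hi => ?_⟩
    by_contra hunc
    have hcov : ¬ PPrel P i i := fun ⟨S, hS, hiS, _⟩ => hunc ⟨S, hS, hiS⟩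
    rcases (mem_allowed_of_not_pprel hcov).1 (hg.2 i) with h | ⟨T, hT, hσT, -⟩
    · exact mem_support.1 hi h
    · exact hunc ⟨T, hT, mem_of_apply_mem_of_mapsTo (hparts T hT).2 hσT⟩
  · rintro ⟨hP, hparts, hcover⟩
    refine ⟨hP, fun i => ?_⟩
    by_cases hcov : PPrel P i i
    · obtain ⟨S, hS, hiS, -⟩ := hcov
      rw [mem_allowed_of_pprel ⟨S, hS, hiS, hiS⟩]
      exact ⟨⟨S, hS, (hparts S hS).2 hiS, hiS⟩, mem_support.1 ((hparts S hS).1 hiS)⟩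
    · rw [mem_allowed_of_not_pprel hcov]
      by_contra! h
      obtain ⟨S, hS, hiS⟩ := hcover i (mem_support.2 h.1)
      exact hcov ⟨S, hS, hiS, hiS⟩

section DisjointMul

variable {c τ : Perm (Fin n)} {P Q : Finset (Finset (Fin n))}

lemma isCycleUnion_mul_iff (hd : c.Disjoint τ) {S : Finset (Fin n)}
    (hS : Disjoint S c.support) : IsCycleUnion (c * τ) S ↔ IsCycleUnion τ S := by
  have happly : ∀ i ∈ S, (c * τ) i = τ i := fun i hi =>
    hd.mul_apply_of_notMem_support (disjoint_left.1 hS hi)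
  rw [IsCycleUnion, IsCycleUnion, hd.support_mul]
  refine and_congr ⟨fun h i hi => ?_, fun h => h.trans subset_union_right⟩
    ⟨fun h i hi => ?_, fun h i hi => ?_⟩
  · exact (mem_union.1 (h hi)).resolve_left (disjoint_left.1 hS hi)
  · rw [← happly i hi]; exact h hi
  · rw [happly i hi]; exact h hi

lemma isCycleUnion_support (hd : c.Disjoint τ) : IsCycleUnion (c * τ) c.support :=
  ⟨hd.support_mul ▸ subset_union_left, fun i hi => by
    rw [hd.mul_apply_of_mem_support hi]; exact apply_mem_support.2 hi⟩

lemma IsCyclePartition.disjoint_support (hd : c.Disjoint τ) (hQ : IsCyclePartition τ Q)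
    {T : Finset (Fin n)} (hT : T ∈ Q) : Disjoint T c.support :=
  disjoint_of_subset_left (hQ.2.1 T hT).1 hd.disjoint_support.symm

lemma IsCyclePartition.notMem_of_support_subset (hc : c.IsCycle) (hd : c.Disjoint τ)
    (hQ : IsCyclePartition τ Q) {S : Finset (Fin n)} (hS : c.support ⊆ S) : S ∉ Q := by
  obtain ⟨x, hx⟩ := hc.nonempty_support
  exact fun hSQ => disjoint_left.1 (hQ.disjoint_support hd hSQ) (hS hx) hx

lemma IsCyclePartition.insert_support (hc : c.IsCycle) (hd : c.Disjoint τ)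
    (hQ : IsCyclePartition τ Q) : IsCyclePartition (c * τ) (insert c.support Q) := by
  refine ⟨hQ.1.insert hc.nonempty_support fun T hT => (hQ.disjoint_support hd hT).symm,
    fun S hS => ?_, fun i hi => ?_⟩
  · rcases mem_insert.1 hS with rfl | hS
    · exact isCycleUnion_support hd
    · exact (isCycleUnion_mul_iff hd (hQ.disjoint_support hd hS)).2 (hQ.2.1 S hS)
  · rcases mem_union.1 (hd.support_mul ▸ hi) with hi | hi
    · exact ⟨_, mem_insert_self _ _, hi⟩
    · obtain ⟨S, hS, hiS⟩ := hQ.2.2 i hi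
      exact ⟨S, mem_insert_of_mem hS, hiS⟩

lemma IsCyclePartition.erase_support (hd : c.Disjoint τ) (hP : IsCyclePartition (c * τ) P)
    (hcP : c.support ∈ P) : IsCyclePartition τ (P.erase c.support) := by
  refine ⟨hP.1.subset (erase_subset _ _), fun S hS => ?_, fun i hi => ?_⟩
  · have hdisj := hP.1.2 S (mem_of_mem_erase hS) _ hcP (ne_of_mem_erase hS)
    exact (isCycleUnion_mul_iff hd hdisj).1 (hP.2.1 S (mem_of_mem_erase hS))
  · obtain ⟨S, hS, hiS⟩ := hP.2.2 i (hd.support_mul ▸ mem_union_right _ hi)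
    refine ⟨S, mem_erase.2 ⟨?_, hS⟩, hiS⟩
    rintro rfl
    exact hd.mem_imp hiS hi

lemma IsCyclePartition.split (hd : c.Disjoint τ) (hP : IsCyclePartition (c * τ) P)
    (hcP : c.support ∉ P) {S₀ : Finset (Fin n)} (hS₀ : S₀ ∈ P) (hsub : c.support ⊆ S₀) :
    IsCyclePartition τ (insert (S₀ \ c.support) (P.erase S₀)) := by
  have hdisj : ∀ S ∈ P.erase S₀, Disjoint S S₀ := fun S hS =>
    hP.1.2 S (mem_of_mem_erase hS) S₀ hS₀ (ne_of_mem_erase hS)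
  have hne : (S₀ \ c.support).Nonempty := by
    rw [sdiff_nonempty]
    exact fun h => hcP (Subset.antisymm h hsub ▸ hS₀)
  have hcycle : IsCycleUnion τ (S₀ \ c.support) := by
    refine (isCycleUnion_mul_iff hd sdiff_disjoint).1
      ⟨sdiff_subset.trans (hP.2.1 S₀ hS₀).1, fun i hi => ?_⟩
    obtain ⟨hi₀, hic⟩ := mem_sdiff.1 hi
    exact mem_sdiff.2 ⟨(hP.2.1 S₀ hS₀).2 hi₀,
      fun h => hic (mem_of_apply_mem_of_mapsTo (isCycleUnion_support hd).2 h)⟩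
  refine ⟨(hP.1.subset (erase_subset _ _)).insert hne fun T hT =>
      disjoint_of_subset_left sdiff_subset (hdisj T hT).symm, fun S hS => ?_, fun i hi => ?_⟩
  · rcases mem_insert.1 hS with rfl | hS
    · exact hcycle
    · exact (isCycleUnion_mul_iff hd (disjoint_of_subset_right hsub (hdisj S hS))).1
        (hP.2.1 S (mem_of_mem_erase hS))
  · obtain ⟨S, hS, hiS⟩ := hP.2.2 i (hd.support_mul ▸ mem_union_right _ hi)
    by_cases h : S = S₀
    · subst h
      exact ⟨_, mem_insert_self _ _, mem_sdiff.2 ⟨hiS, hd.symm.mem_imp hi⟩⟩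
    · exact ⟨S, mem_insert_of_mem (mem_erase.2 ⟨h, hS⟩), hiS⟩

lemma IsCyclePartition.join (hc : c.IsCycle) (hd : c.Disjoint τ) (hQ : IsCyclePartition τ Q)
    {B : Finset (Fin n)} (hB : B ∈ Q) :
    IsCyclePartition (c * τ) (insert (B ∪ c.support) (Q.erase B)) := by
  have hdisj : ∀ T ∈ Q.erase B, Disjoint (B ∪ c.support) T := fun T hT =>
    disjoint_union_left.2 ⟨hQ.1.2 B hB T (mem_of_mem_erase hT) (ne_of_mem_erase hT).symm,
      (hQ.disjoint_support hd (mem_of_mem_erase hT)).symm⟩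
  refine ⟨(hQ.1.subset (erase_subset _ _)).insert (hc.nonempty_support.mono subset_union_right)
      hdisj, fun S hS => ?_, fun i hi => ?_⟩
  · rcases mem_insert.1 hS with rfl | hS
    · exact ((isCycleUnion_mul_iff hd (hQ.disjoint_support hd hB)).2 (hQ.2.1 B hB)).union
        (isCycleUnion_support hd)
    · exact (isCycleUnion_mul_iff hd (hQ.disjoint_support hd (mem_of_mem_erase hS))).2
        (hQ.2.1 S (mem_of_mem_erase hS))
  · rcases mem_union.1 (hd.support_mul ▸ hi) with hi | hi
    · exact ⟨_, mem_insert_self _ _, mem_union_right _ hi⟩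
    · obtain ⟨S, hS, hiS⟩ := hQ.2.2 i hi
      by_cases h : S = B
      · subst h
        exact ⟨_, mem_insert_self _ _, mem_union_left _ hiS⟩
      · exact ⟨S, mem_insert_of_mem (mem_erase.2 ⟨h, hS⟩), hiS⟩

lemma IsCyclePartition.support_notMem_join (hc : c.IsCycle) (hd : c.Disjoint τ)
    (hQ : IsCyclePartition τ Q) {B : Finset (Fin n)} (hB : B ∈ Q) :
    c.support ∉ insert (B ∪ c.support) (Q.erase B) := by
  rw [mem_insert, not_or]
  refine ⟨fun h => ?_, fun h => hQ.notMem_of_support_subset hc hd Subset.rfl (mem_of_mem_erase h)⟩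
  obtain ⟨y, hy⟩ := hQ.1.1 B hB
  exact disjoint_left.1 (hQ.disjoint_support hd hB) hy (h ▸ mem_union_left _ hy)

lemma eq_of_insert_union_support_erase_eq (hc : c.IsCycle) (hd : c.Disjoint τ)
    {Q Q' : Finset (Finset (Fin n))} (hQ : IsCyclePartition τ Q) (hQ' : IsCyclePartition τ Q')
    {B B' : Finset (Fin n)} (hB : B ∈ Q) (hB' : B' ∈ Q')
    (h : insert (B ∪ c.support) (Q.erase B) = insert (B' ∪ c.support) (Q'.erase B')) :
    Q = Q' ∧ B = B' := by
  obtain ⟨x, hx⟩ := hc.nonempty_support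
  have hmem : B' ∪ c.support ∈ insert (B ∪ c.support) (Q.erase B) := h ▸ mem_insert_self _ _
  have hBB' : B = B' := by
    have := (hQ.join hc hd hB).1.eq_of_mem_of_mem (mem_insert_self _ _) hmem
      (mem_union_right _ hx) (mem_union_right _ hx)
    rw [← union_sdiff_cancel_right (hQ.disjoint_support hd hB),
      ← union_sdiff_cancel_right (hQ'.disjoint_support hd hB'), this]
  subst hBB'
  have hnot : ∀ {R}, IsCyclePartition τ R → B ∪ c.support ∉ R.erase B := fun hR hmem =>
    hR.notMem_of_support_subset hc hd subset_union_right (mem_of_mem_erase hmem)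
  refine ⟨?_, rfl⟩
  rw [← insert_erase hB, ← insert_erase hB', ← erase_insert (hnot hQ), h, erase_insert (hnot hQ')]

lemma IsCyclePartition.exists_eq_insert_union_support_erase (hc : c.IsCycle)
    (hd : c.Disjoint τ) (hP : IsCyclePartition (c * τ) P) (hcP : c.support ∉ P) :
    ∃ Q B, IsCyclePartition τ Q ∧ B ∈ Q ∧ insert (B ∪ c.support) (Q.erase B) = P := by
  obtain ⟨x, hx⟩ := hc.nonempty_support
  obtain ⟨S₀, hS₀, hxS₀⟩ := hP.2.2 x (hd.support_mul ▸ mem_union_left _ hx)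
  have hsub := hc.support_subset_of_mapsTo_mul hd (hP.2.1 S₀ hS₀).2 hxS₀ hx
  have hnot : S₀ \ c.support ∉ P.erase S₀ := fun h =>
    ne_of_mem_erase h (hP.1.eq_of_subset (mem_of_mem_erase h) hS₀ sdiff_subset)
  refine ⟨_, _, hP.split hd hcP hS₀ hsub, mem_insert_self _ _, ?_⟩
  rw [erase_insert hnot, sdiff_union_of_subset hsub, insert_erase hS₀]

end DisjointMul

noncomputable def cyclePartitions (σ : Perm (Fin n)) : Finset (Finset (Finset (Fin n))) :=
  univ.filter (IsCyclePartition σ)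

@[simp]
lemma mem_cyclePartitions {σ : Perm (Fin n)} {P : Finset (Finset (Fin n))} :
    P ∈ cyclePartitions σ ↔ IsCyclePartition σ P := by
  simp [cyclePartitions]

lemma cyclePartitions_one : cyclePartitions (1 : Perm (Fin n)) = {∅} := by
  ext P
  rw [mem_cyclePartitions, mem_singleton]
  refine ⟨fun hP => eq_empty_of_forall_notMem fun S hS => ?_, ?_⟩
  · obtain ⟨i, hi⟩ := hP.1.1 S hS
    simpa using (hP.2.1 S hS).1 hi
  · rintro rfl
    exact ⟨⟨by simp, by simp⟩, by simp, by simp⟩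

section Sums

variable {c τ : Perm (Fin n)} (hc : c.IsCycle) (hd : c.Disjoint τ)
include hc hd

lemma sum_weight_filter_support_mem :
    ∑ P ∈ (cyclePartitions (c * τ)).filter (c.support ∈ ·), weight P =
      ∑ Q ∈ cyclePartitions τ, (-1) ^ (c.support.card + 1) * (Q.card + 1) * weight Q := by
  have hnot : ∀ Q ∈ cyclePartitions τ, c.support ∉ Q := fun Q hQ =>
    (mem_cyclePartitions.1 hQ).notMem_of_support_subset hc hd Subset.rfl
  symm
  refine sum_nbij' (insert c.support) (erase · c.support) (fun Q hQ => ?_) (fun P hP => ?_)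
    (fun Q hQ => erase_insert (hnot Q hQ)) (fun P hP => insert_erase (mem_filter.1 hP).2)
    (fun Q hQ => (weight_insert (hnot Q hQ)).symm)
  · exact mem_filter.2 ⟨mem_cyclePartitions.2 ((mem_cyclePartitions.1 hQ).insert_support hc hd),
      mem_insert_self _ _⟩
  · obtain ⟨hP, hcP⟩ := mem_filter.1 hP
    exact mem_cyclePartitions.2 ((mem_cyclePartitions.1 hP).erase_support hd hcP)

lemma sum_weight_filter_support_notMem :
    ∑ P ∈ (cyclePartitions (c * τ)).filter (c.support ∉ ·), weight P =
      ∑ Q ∈ cyclePartitions τ, (-1) ^ c.support.card * Q.card * weight Q := by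
  have hsum : ∀ Q : Finset (Finset (Fin n)),
      (-1) ^ c.support.card * Q.card * weight Q = ∑ _B ∈ Q, (-1) ^ c.support.card * weight Q := by
    intro Q
    rw [sum_const, nsmul_eq_mul]
    ring
  rw [sum_congr rfl fun Q _ => hsum Q, sum_sigma']
  symm
  refine sum_bij (fun z _ => insert (z.2 ∪ c.support) (z.1.erase z.2)) (fun z hz => ?_)
    (fun ⟨Q, B⟩ hz ⟨Q', B'⟩ hz' h => ?_) (fun P hP => ?_) (fun z hz => ?_)
  · obtain ⟨hQ, hB⟩ := mem_sigma.1 hz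
    have hQ := mem_cyclePartitions.1 hQ
    exact mem_filter.2 ⟨mem_cyclePartitions.2 (hQ.join hc hd hB), hQ.support_notMem_join hc hd hB⟩
  · obtain ⟨hQ, hB⟩ := mem_sigma.1 hz
    obtain ⟨hQ', hB'⟩ := mem_sigma.1 hz'
    obtain ⟨rfl, rfl⟩ := eq_of_insert_union_support_erase_eq hc hd (mem_cyclePartitions.1 hQ)
      (mem_cyclePartitions.1 hQ') hB hB' h
    rfl
  · obtain ⟨hP, hcP⟩ := mem_filter.1 hP
    obtain ⟨Q, B, hQ, hB, rfl⟩ :=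
      (mem_cyclePartitions.1 hP).exists_eq_insert_union_support_erase hc hd hcP
    exact ⟨⟨Q, B⟩, mem_sigma.2 ⟨mem_cyclePartitions.2 hQ, hB⟩, rfl⟩
  · obtain ⟨hQ, hB⟩ := mem_sigma.1 hz
    have hQ := mem_cyclePartitions.1 hQ
    exact (weight_insert_union_erase hB (hQ.disjoint_support hd hB) fun h =>
      hQ.notMem_of_support_subset hc hd subset_union_right (mem_of_mem_erase h)).symm

lemma sum_weight_cyclePartitions_mul :
    ∑ P ∈ cyclePartitions (c * τ), weight P =
      -(-1) ^ c.support.card * ∑ Q ∈ cyclePartitions τ, weight Q := by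
  rw [← sum_filter_add_sum_filter_not _ (c.support ∈ ·), sum_weight_filter_support_mem hc hd,
    sum_weight_filter_support_notMem hc hd, ← sum_add_distrib, mul_sum]
  exact sum_congr rfl fun Q _ => by ring

end Sums

theorem sum_weight_cyclePartitions (σ : Perm (Fin n)) :
    ∑ P ∈ cyclePartitions σ, weight P = sign σ := by
  induction σ using cycle_induction_on with
  | base_one => simp [cyclePartitions_one, weight]
  | base_cycles σ hσ =>
    have := sum_weight_cyclePartitions_mul hσ (disjoint_one_right σ)
    rw [mul_one] at this
    rw [this, cyclePartitions_one, hσ.sign]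
    simp [weight]
  | induction_disjoint c τ hd hc _ ih =>
    rw [sum_weight_cyclePartitions_mul hc hd, ih, Perm.sign_mul, hc.sign]
    push_cast
    ring

variable {R : Type*} [CommRing R]

lemma sum_mul_prod_eq_det (A : Matrix (Fin n) (Fin n) R) (w : (Fin n → Fin n) → R)
    (hw₀ : ∀ g, ¬ Surjective g → w g = 0) (hw : ∀ σ : Perm (Fin n), w σ = sign σ) :
    ∑ g, w g * ∏ i, A i (g i) = A.det := by
  rw [← Matrix.det_transpose, Matrix.det_apply',
    ← sum_subset (subset_univ (univ.map ⟨_, Equiv.coe_fn_injective⟩)) fun g _ hg => ?_, sum_map]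
  · simp [hw]
  · rw [hw₀ g fun hs => hg (mem_map.2 ⟨ofBijective g ⟨Finite.injective_iff_surjective.2 hs, hs⟩,
      mem_univ _, rfl⟩), zero_mul]

lemma sum_weight_mul_prod_sum_allowed (A : Matrix (Fin n) (Fin n) R) :
    ∑ P ∈ univ.filter IsPartialPartition, (weight P : R) * ∏ i, ∑ j ∈ allowed P i, A i j =
      ∑ g, ((∑ P ∈ univ.filter (IsCompatible g), weight P : ℤ) : R) * ∏ i, A i (g i) := by
  have hexpand : ∀ P : Finset (Finset (Fin n)), ∏ i, ∑ j ∈ allowed P i, A i j =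
      ∑ g ∈ Fintype.piFinset (allowed P), ∏ i, A i (g i) := fun P =>
    prod_univ_sum (t := allowed P) (f := fun i j => A i j)
  simp only [hexpand, mul_sum, Int.cast_sum, sum_mul]
  refine sum_comm' fun P g => ?_
  simp [IsCompatible, Fintype.mem_piFinset]

theorem det_eq_sum_weight_mul_prod_sum_allowed (A : Matrix (Fin n) (Fin n) R) :
    A.det =
      ∑ P ∈ univ.filter IsPartialPartition, (weight P : R) * ∏ i, ∑ j ∈ allowed P i, A i j := by
  rw [sum_weight_mul_prod_sum_allowed, sum_mul_prod_eq_det]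
  · intro g hg
    rw [sum_weight_eq_zero_of_not_surjective hg, Int.cast_zero]
  · intro σ
    simp_rw [isCompatible_iff_isCyclePartition]
    rw [← cyclePartitions, sum_weight_cyclePartitions]

end PartialPartition

open scoped Classical in
theorem det_eq_sum_partial_partitions_charP_general {F : Type*} [Field F] {p : ℕ} [CharP F p]
    (hp : 0 < p) {n : ℕ} (A : Matrix (Fin n) (Fin n) F) :
    A.det = ∑ P ∈ Finset.univ.filter (fun P : Finset (Finset (Fin n)) =>
        IsPartialPartition P ∧ P.card ≤ p - 1),
      (∏ S ∈ P, (-1 : F) ^ (S.card + 1)) * (P.card.factorial : F) *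
        ∏ i : Fin n,
          (if PPrel P i i then
            ∑ j ∈ Finset.univ.filter (fun j => PPrel P j i ∧ j ≠ i), A i j
          else
            A i i + ∑ j ∈ Finset.univ.filter (fun j => PPrel P j j), A i j) := by
  simp_rw [← PartialPartition.sum_allowed]
  rw [PartialPartition.det_eq_sum_weight_mul_prod_sum_allowed, filter_and]
  refine (sum_subset inter_subset_left fun P hP hPp => ?_).symm.trans
    (sum_congr rfl fun P _ => by simp [PartialPartition.weight])
  have hcard : p ≤ P.card := by
    simp only [mem_inter, mem_filter, mem_univ, true_and, not_and, not_le] at hP hPp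
    exact Nat.le_of_pred_lt (hPp hP)
  have hfact : (P.card.factorial : F) = 0 :=
    (CharP.cast_eq_zero_iff F p _).2 (Nat.dvd_factorial hp hcard)
  simp [PartialPartition.weight, hfact]

open scoped Classical in
/-- Over a field of characteristic `p > 0`, the determinant formula only needs the
partial partitions with at most `p - 1` parts. -/
theorem det_eq_sum_partial_partitions_charP {F : Type*} [Field F] {p : ℕ} [CharP F p]
    (hp : 0 < p) {n : ℕ} (hn : 0 < n) (A : Matrix (Fin n) (Fin n) F) :
    A.det = ∑ P ∈ Finset.univ.filter (fun P : Finset (Finset (Fin n)) =>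
        IsPartialPartition P ∧ P.card ≤ p - 1),
      (∏ S ∈ P, (-1 : F) ^ (S.card + 1)) * (P.card.factorial : F) *
        ∏ i : Fin n,
          (if PPrel P i i then
            ∑ j ∈ Finset.univ.filter (fun j => PPrel P j i ∧ j ≠ i), A i j
          else
            A i i + ∑ j ∈ Finset.univ.filter (fun j => PPrel P j j), A i j) :=
  det_eq_sum_partial_partitions_charP_general hp A
end

section
/- Let F be a field of characteristic 2, let n be a positive integer, and let A be an n × n matrix over F. Then per(A) = det(A) = Σ_{S ⊆ [n]} Π_{i=1}^n (Σ_{j ∈ S △ {i}} a_{i,j}), where S △ {i} denotes the symmetric difference of S and {i}. Consequently (since every singleton S contributes a zero term), the tensor rank of the n × n determinant (equivalently, permanent) tensor over F is at most 2^n − n. -/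
open Finset Function

theorem Matrix.permanent_eq_det_of_charTwo {n R : Type*} [Fintype n] [DecidableEq n]
    [CommRing R] [CharP R 2] (A : Matrix n n R) : A.permanent = A.det := by
  rw [Matrix.det_apply, Matrix.permanent]
  refine sum_congr rfl fun σ _ => ?_
  rcases Int.units_eq_one_or (Equiv.Perm.sign σ) with h | h <;> simp [h, CharTwo.neg_eq]

theorem Finset.mem_symmDiff_singleton_iff {α : Type*} [DecidableEq α] {S : Finset α} {i j : α} :
    j ∈ symmDiff S {i} ↔ (j ∈ S ↔ j ≠ i) := by
  rw [mem_symmDiff, mem_singleton]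
  tauto

section SymmDiffExpansion

variable {α : Type*} [Fintype α] [DecidableEq α]

def compatibleSets (p : α → α) : Finset (Finset α) :=
  {S | ∀ i, p i ∈ symmDiff S {i}}

theorem compatibleSets_of_bijective {p : α → α} (hp : Bijective p) :
    compatibleSets p = {({i | p i ≠ i} : Finset α)} := by
  ext S
  simp only [compatibleSets, mem_filter, mem_univ, true_and, mem_singleton,
    mem_symmDiff_singleton_iff]
  constructor
  · intro h
    ext j
    obtain ⟨i, rfl⟩ := hp.2 j
    simp [h i, hp.1.ne_iff]
  · rintro rfl i
    simp [hp.1.ne_iff]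

theorem natCast_card_compatibleSets_of_not_surjective {R : Type*} [Semiring R] [CharP R 2]
    {p : α → α} (hp : ¬Surjective p) : (#(compatibleSets p) : R) = 0 := by
  obtain ⟨j, hj⟩ := not_forall.mp hp
  have toggle_compatible : ∀ S : Finset α,
      (∀ i, p i ∈ symmDiff (symmDiff S {j}) {i}) ↔ ∀ i, p i ∈ symmDiff S {i} := by
    refine fun S => forall_congr' fun i => ?_
    have : p i ≠ j := fun h => hj ⟨i, h⟩
    simp [mem_symmDiff_singleton_iff, this]
  rw [compatibleSets, natCast_card_filter]
  refine sum_ninvolution (fun S => symmDiff S {j}) (fun S => ?_) (fun S _ => ?_)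
    (fun _ => mem_univ _) (fun S => symmDiff_symmDiff_cancel_right _ _)
  · simp only [toggle_compatible, CharTwo.add_self_eq_zero]
  · simp [symmDiff_eq_left]

theorem natCast_card_compatibleSets {R : Type*} [Semiring R] [CharP R 2] (p : α → α) :
    (#(compatibleSets p) : R) = if Bijective p then 1 else 0 := by
  split_ifs with hp
  · simp [compatibleSets_of_bijective hp]
  · exact natCast_card_compatibleSets_of_not_surjective (mt Finite.surjective_iff_bijective.mp hp)

theorem prod_sum_symmDiff_singleton {R : Type*} [CommSemiring R] (A : Matrix α α R)
    (S : Finset α) :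
    ∏ i, ∑ j ∈ symmDiff S {i}, A i j =
      ∑ p : α → α, if S ∈ compatibleSets p then ∏ i, A i (p i) else 0 := by
  rw [prod_univ_sum (f := fun i j => A i j), ← sum_filter]
  congr 1
  ext p
  simp [compatibleSets, Fintype.mem_piFinset]

theorem sum_ite_bijective_eq_sum_perm {M : Type*} [AddCommMonoid M] (f : (α → α) → M) :
    ∑ p : α → α, (if Bijective p then f p else 0) = ∑ σ : Equiv.Perm α, f σ := by
  rw [← sum_filter, sum_subtype _ (p := Bijective) (fun p => by simp)]
  exact Fintype.sum_equiv Equiv.bijectiveEquiv _ _ fun _ => rfl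

theorem sum_prod_sum_symmDiff_singleton_eq_permanent {R : Type*} [CommSemiring R] [CharP R 2]
    (A : Matrix α α R) :
    ∑ S : Finset α, ∏ i, ∑ j ∈ symmDiff S {i}, A i j = A.permanent :=
  calc ∑ S : Finset α, ∏ i, ∑ j ∈ symmDiff S {i}, A i j
      = ∑ p : α → α, (#(compatibleSets p) : R) * ∏ i, A i (p i) := by
        simp_rw [prod_sum_symmDiff_singleton, sum_comm (γ := Finset α), sum_ite_mem, univ_inter,
          sum_const, nsmul_eq_mul]
    _ = ∑ σ : Equiv.Perm α, ∏ i, A i (σ i) := by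
        simp_rw [natCast_card_compatibleSets, ite_mul, one_mul, zero_mul]
        exact sum_ite_bijective_eq_sum_perm fun p => ∏ i, A i (p i)
    _ = A.permanent := by rw [← Matrix.permanent_transpose]; rfl

theorem prod_sum_symmDiff_singleton_singleton_eq_zero {R : Type*} [CommSemiring R]
    (A : Matrix α α R) (m : α) :
    ∏ i, ∑ j ∈ symmDiff {m} {i}, A i j = 0 :=
  prod_eq_zero (mem_univ m) (by simp)

theorem sum_prod_sum_symmDiff_singleton_eq_sum_card_ne_one {R : Type*} [CommSemiring R]
    (A : Matrix α α R) :
    ∑ S : Finset α, ∏ i, ∑ j ∈ symmDiff S {i}, A i j =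
      ∑ S : {S : Finset α // #S ≠ 1}, ∏ i, ∑ j ∈ symmDiff S.1 {i}, A i j := by
  rw [← sum_subtype {S : Finset α | #S ≠ 1} (fun S => by simp)
    (fun S => ∏ i, ∑ j ∈ symmDiff S {i}, A i j), sum_filter_of_ne]
  rintro S - hS hcard
  obtain ⟨m, rfl⟩ := card_eq_one.mp hcard
  exact hS (prod_sum_symmDiff_singleton_singleton_eq_zero A m)

end SymmDiffExpansion

theorem Fintype.card_finset_card_ne_one (α : Type*) [Fintype α] :
    Fintype.card {S : Finset α // #S ≠ 1} = 2 ^ Fintype.card α - Fintype.card α := by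
  rw [Fintype.card_subtype_compl, Fintype.card_finset_len, Nat.choose_one_right, card_finset]

theorem exists_isDetDecomposition_of_det_eq_sum {F ι : Type*} [Field F] [Fintype ι] {n : ℕ}
    (w : ι → Fin n → Fin n → F)
    (hw : ∀ A : Matrix (Fin n) (Fin n) F, A.det = ∑ k, ∏ i, ∑ j, w k i j * A i j) :
    ∃ v, IsDetDecomposition F n (Fintype.card ι) v := by
  let e := Fintype.equivFin ι
  refine ⟨fun i k j => w (e.symm k) i j, fun A => ?_⟩
  rw [hw A, ← e.symm.sum_comp]

theorem det_eq_per_char_two_formula_general (F : Type*) [Field F] [CharP F 2]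
    (n : ℕ) :
    (∀ A : Matrix (Fin n) (Fin n) F,
      A.permanent = A.det ∧
      A.det = ∑ S : Finset (Fin n), ∏ i : Fin n, ∑ j ∈ symmDiff S {i}, A i j) ∧
    ∃ v : Fin n → Fin (2 ^ n - n) → Fin n → F,
      IsDetDecomposition F n (2 ^ n - n) v := by
  have formula (A : Matrix (Fin n) (Fin n) F) :
      A.det = ∑ S : Finset (Fin n), ∏ i, ∑ j ∈ symmDiff S {i}, A i j := by
    rw [← A.permanent_eq_det_of_charTwo, sum_prod_sum_symmDiff_singleton_eq_permanent]
  refine ⟨fun A => ⟨A.permanent_eq_det_of_charTwo, formula A⟩, ?_⟩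
  have decomposition := exists_isDetDecomposition_of_det_eq_sum
    (fun (S : {S : Finset (Fin n) // #S ≠ 1}) i j => if j ∈ symmDiff S.1 {i} then (1 : F) else 0)
    fun A => by
      simp only [formula A, sum_prod_sum_symmDiff_singleton_eq_sum_card_ne_one, ite_mul, one_mul,
        zero_mul, sum_ite_mem, univ_inter]
  rwa [Fintype.card_finset_card_ne_one, Fintype.card_fin] at decomposition

/-- Over a field of characteristic `2`, the permanent equals the determinant, both are
given by the `2^n - n` term symmetric-difference formula, and consequently the tensor
rank of the determinant (equivalently, permanent) is at most `2^n - n`. -/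
theorem det_eq_per_char_two_formula (F : Type*) [Field F] [CharP F 2]
    (n : ℕ) (hn : 0 < n) :
    (∀ A : Matrix (Fin n) (Fin n) F,
      A.permanent = A.det ∧
      A.det = ∑ S : Finset (Fin n), ∏ i : Fin n, ∑ j ∈ symmDiff S {i}, A i j) ∧
    ∃ v : Fin n → Fin (2 ^ n - n) → Fin n → F,
      IsDetDecomposition F n (2 ^ n - n) v :=
  det_eq_per_char_two_formula_general F n
end

section
/- Let q ≥ 2 be a prime power, let F_q be the field with q elements, and let n ≥ 5. Then every rank-r tensor decomposition of the n × n determinant over F_q satisfies (r : ℝ) ≥ C(n, ⌊n/2⌋) + log_q(C(n, ⌊n/2⌋)); that is, the tensor rank of the n × n determinant tensor over F_q is at least C(n, ⌊n/2⌋) + log_q(C(n, ⌊n/2⌋)). -/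
/-!
Put `m = ⌈n/2⌉ ≥ 3` and fix a set `T` of `m` rows. For every `m`-set `S` of columns choose a
permutation `σ_S` with `σ_S T = S`, and let `z_S ∈ F^r` record, for each of the `r` terms, the
product of the coordinates that the rows outside `T` pick under `σ_S`. Evaluating the
decomposition at 0/1 matrices shows that pairing `∑ c_S z_S` with the products of the rows of `T`
under an assignment `f` gives `∑ c_S det`, and such a determinant vanishes unless `f` maps `T`
bijectively onto `S`. A `T × T` family of assignments built from transpositions turns this
pairing into a nonsingular diagonal matrix that factors through `diagonal (∑ c_S z_S)`, so every
nonzero combination `∑ c_S z_S` has at least `m ≥ 3` nonzero coordinates. Hence the vectors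
`∑ c_S z_S + e_k` are pairwise distinct, which gives `q ^ C(n, m) * r ≤ q ^ r`.
-/

open Function Finset Matrix Equiv

theorem hammingNorm_single_le_one {ι β : Type*} [Fintype ι] [DecidableEq ι] [Zero β]
    [DecidableEq β] (i : ι) (b : β) : hammingNorm (Pi.single i b : ι → β) ≤ 1 :=
  (card_le_card fun j hj => mem_singleton.mpr <| by
    by_contra h
    simp [Pi.single_apply, h] at hj).trans (card_singleton i).le

theorem card_pow_mul_card_le_of_three_le_hammingNorm {F ι κ : Type*} [Ring F] [Nontrivial F]
    [Fintype F] [DecidableEq F] [Fintype ι] [Fintype κ] [DecidableEq κ]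
    (Z : (ι → F) →ₗ[F] κ → F) (hZ : ∀ c ≠ 0, 3 ≤ hammingNorm (Z c)) :
    Fintype.card F ^ Fintype.card ι * Fintype.card κ ≤ Fintype.card F ^ Fintype.card κ := by
  classical
  have hinj : Injective fun p : (ι → F) × κ => Z p.1 + Pi.single p.2 1 := by
    rintro ⟨c, k⟩ ⟨c', k'⟩ h
    simp only at h
    obtain rfl : c = c' := by
      by_contra hne
      have hdiff : Z (c - c') = -Pi.single k 1 + Pi.single k' 1 := by
        rw [map_sub, neg_add_eq_sub, sub_eq_sub_iff_add_eq_add, h, add_comm]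
      have h3 := hZ (c - c') (sub_ne_zero.mpr hne)
      rw [hdiff, ← hammingDist_eq_hammingNorm] at h3
      have h2 := hammingDist_triangle (Pi.single k (1 : F) : κ → F) 0 (Pi.single k' 1)
      rw [hammingDist_zero_right, hammingDist_zero_left] at h2
      linarith [hammingNorm_single_le_one k (1 : F), hammingNorm_single_le_one k' (1 : F)]
    obtain rfl : k = k' := by simpa [Pi.single_apply] using congrFun (add_left_cancel h) k
    rfl
  simpa only [Fintype.card_prod, Fintype.card_fun] using Fintype.card_le_of_injective _ hinj

theorem Matrix.card_le_hammingNorm_of_mul_diagonal_mul_eq_diagonal {F m n : Type*} [Field F]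
    [DecidableEq F] [Fintype m] [DecidableEq m] [Fintype n] [DecidableEq n]
    {X : Matrix m n F} {z : n → F} {Y : Matrix n m F} {d : m → F} (hd : ∀ i, d i ≠ 0)
    (h : X * diagonal z * Y = diagonal d) : Fintype.card m ≤ hammingNorm z := by
  calc Fintype.card m = (diagonal d).rank := by simp [rank_diagonal, hd]
    _ ≤ (X * diagonal z).rank := h ▸ rank_mul_le_left _ _
    _ ≤ (diagonal z).rank := rank_mul_le_right _ _
    _ = hammingNorm z := by rw [rank_diagonal, Fintype.card_subtype]; rfl

section
variable {ρ : Type*} [DecidableEq ρ] {T : Finset ρ}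

theorem Finset.swap_apply_mem {a b x : ρ} (ha : a ∈ T) (hb : b ∈ T) (hx : x ∈ T) :
    swap a b x ∈ T := by
  rw [swap_apply_def]
  split_ifs <;> assumption

theorem Finset.map_swap_eq_self {a b : ρ} (ha : a ∈ T) (hb : b ∈ T) :
    T.map (swap a b).toEmbedding = T :=
  eq_of_subset_of_card_le (fun _ hx => by
    obtain ⟨x, hxT, rfl⟩ := mem_map.mp hx
    exact swap_apply_mem ha hb hxT) (card_map _).ge

theorem Finset.not_injective_piecewise_comp_update_swap {p a b : ρ} (hp : p ∈ T) (ha : a ∈ T)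
    (hb : b ∈ T) (hab : a ≠ b) (w g : ρ → ρ) :
    ¬ Injective (T.piecewise (w ∘ update (swap p b) p a) g) := by
  intro hinj
  have hx : swap p b a ∈ T := swap_apply_mem hp hb ha
  have hxp : swap p b a ≠ p := fun h => hab (by rwa [swap_apply_eq_iff, swap_apply_left] at h)
  refine hxp (hinj ?_)
  simp only [piecewise_eq_of_mem _ _ _ hx, piecewise_eq_of_mem _ _ _ hp, Function.comp_apply,
    update_self, update_of_ne hxp, swap_apply_self]

theorem Equiv.Perm.injective_piecewise_iff (T : Finset ρ) (w σ : Perm ρ) :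
    Injective (T.piecewise w σ) ↔ T.map w.toEmbedding = T.map σ.toEmbedding := by
  constructor
  · intro ht
    refine eq_of_subset_of_card_le (fun x hx => mem_map_equiv.mpr ?_) (by simp)
    rw [mem_map_equiv] at hx
    by_contra hσx
    have hxx := ht (show T.piecewise w σ (w.symm x) = T.piecewise w σ (σ.symm x) by
      rw [piecewise_eq_of_mem _ _ _ hx, piecewise_eq_of_notMem _ _ _ hσx, apply_symm_apply,
        apply_symm_apply])
    exact hσx (hxx ▸ hx)
  · intro hT x y hxy
    have cross : ∀ x y, x ∈ T → y ∉ T → w x ≠ σ y := by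
      intro x y hx hy hxy
      have hwx : w x ∈ T.map σ.toEmbedding := hT ▸ mem_map_equiv.mpr (by simpa using hx)
      rw [hxy, mem_map_equiv, symm_apply_apply] at hwx
      exact hy hwx
    by_cases hx : x ∈ T <;> by_cases hy : y ∈ T <;>
      simp only [piecewise_eq_of_mem, piecewise_eq_of_notMem, hx, hy, not_false_eq_true] at hxy
    · exact w.injective hxy
    · exact absurd hxy (cross x y hx hy)
    · exact absurd hxy.symm (cross y x hy hx)
    · exact σ.injective hxy

end

theorem Finset.prod_apply_update_of_mem {ρ M : Type*} [DecidableEq ρ] [CommMonoid M]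
    {T : Finset ρ} {p : ρ} (hp : p ∈ T) (h : ρ → ρ → M) (φ : ρ → ρ) (a : ρ) :
    ∏ i ∈ T, h i (update φ p a i) = h p a * ∏ i ∈ T.erase p, h i (φ i) := by
  rw [← mul_prod_erase T _ hp, update_self]
  exact congrArg _ (prod_congr rfl fun i hi => by rw [update_of_ne (ne_of_mem_erase hi)])

section
variable {F κ ρ : Type*} [Field F] [Fintype κ] [Fintype ρ] [DecidableEq ρ]

theorem sum_mul_prod_eq_sum_mul_sum_prod_piecewise {ι : Type*} [Fintype ι]
    (v : ρ → κ → ρ → F) (T : Finset ρ) (g : ι → ρ → ρ) (c : ι → F) (f : ρ → ρ) :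
    ∑ k, (∑ s, c s • fun k => ∏ i ∈ Tᶜ, v i k (g s i)) k * ∏ i ∈ T, v i k (f i) =
      ∑ s, c s * ∑ k, ∏ i, v i k (T.piecewise f (g s) i) := by
  have split : ∀ s k, ∏ i, v i k (T.piecewise f (g s) i) =
      (∏ i ∈ T, v i k (f i)) * ∏ i ∈ Tᶜ, v i k (g s i) := fun s k => by
    rw [← prod_mul_prod_compl T]
    congr 1 <;> refine prod_congr rfl fun i hi => ?_
    · rw [piecewise_eq_of_mem _ _ _ hi]
    · rw [piecewise_eq_of_notMem _ _ _ (mem_compl.mp hi)]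
  simp only [split, Finset.sum_apply, Pi.smul_apply, smul_eq_mul, sum_mul, mul_sum]
  rw [sum_comm]
  exact sum_congr rfl fun s _ => sum_congr rfl fun k _ => by ring

theorem card_le_hammingNorm_sum_smul_prod_compl [DecidableEq F] {ι : Type*} [Fintype ι]
    {v : ρ → κ → ρ → F} (hv : ∀ t : ρ → ρ, ∑ k, ∏ i, v i k (t i) = 0 ↔ ¬ Injective t)
    (T : Finset ρ) {σ : ι → Perm ρ} (hσ : Injective fun s => T.map (σ s).toEmbedding)
    {c : ι → F} (hc : c ≠ 0) :
    #T ≤ hammingNorm (∑ s, c s • fun k => ∏ i ∈ Tᶜ, v i k (σ s i)) := by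
  classical
  obtain ⟨s₀, hs₀⟩ := Function.ne_iff.mp hc
  obtain rfl | ⟨p, hp⟩ := T.eq_empty_or_nonempty
  · simp
  set w := σ s₀
  -- Row `p` only depends on `a` and the other rows only on `b`. For `a = b` this is
  -- `w ∘ swap p a`, a bijection from `T` onto `w '' T`; for `a ≠ b` the rows `p` and
  -- `swap p b a` collide.
  let f : T → T → ρ → ρ := fun a b => w ∘ update (swap p b) p a
  let M : Matrix T T F :=
    of fun a b => ∑ s, c s * ∑ k, ∏ i, v i k (T.piecewise (f a b) (σ s) i)
  have hfactor : of (fun (a : T) k => v p k (w a)) *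
      diagonal (∑ s, c s • fun k => ∏ i ∈ Tᶜ, v i k (σ s i)) *
      of (fun k (b : T) => ∏ i ∈ T.erase p, v i k (w (swap p b i))) = M := by
    ext a b
    simp only [M, of_apply, ← sum_mul_prod_eq_sum_mul_sum_prod_piecewise, f, Function.comp_apply]
    rw [mul_apply]
    refine sum_congr rfl fun k _ => ?_
    simp only [mul_diagonal, of_apply, prod_apply_update_of_mem hp fun i x => v i k (w x)]
    ring
  have hdiag : ∀ a, M a a ≠ 0 := by
    intro a
    have hfa : f a a = ⇑((swap p a).trans w) := by
      have hupd : update (swap p (a : ρ) : ρ → ρ) p a = swap p (a : ρ) :=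
        update_eq_self_iff.mpr (swap_apply_left _ _).symm
      simp only [f, coe_trans, hupd]
    have hmap : T.map ((swap p a).trans w).toEmbedding = T.map w.toEmbedding := by
      rw [Equiv.trans_toEmbedding, ← Finset.map_map, map_swap_eq_self hp a.2]
    simp only [M, of_apply, hfa]
    rw [Fintype.sum_eq_single s₀ fun s hs => by
      rw [(hv _).mpr (by rw [Perm.injective_piecewise_iff, hmap]; exact fun h => hs (hσ h).symm),
        mul_zero]]
    exact mul_ne_zero hs₀ fun h => (hv _).mp h ((Perm.injective_piecewise_iff _ _ _).mpr hmap)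
  have hM : M = diagonal fun a => M a a := by
    ext a b
    by_cases hab : a = b
    · subst hab; simp
    · rw [diagonal_apply_ne _ hab]
      exact sum_eq_zero fun s _ => by
        rw [(hv _).mpr (not_injective_piecewise_comp_update_swap hp a.2 b.2
          (Subtype.coe_ne_coe.mpr hab) _ _), mul_zero]
  simpa using card_le_hammingNorm_of_mul_diagonal_mul_eq_diagonal hdiag (hfactor.trans hM)

end

theorem IsDetDecomposition.sum_prod_eq_zero_iff {F : Type*} [Field F] {n r : ℕ}
    {v : Fin n → Fin r → Fin n → F} (hv : IsDetDecomposition F n r v) (t : Fin n → Fin n) :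
    ∑ k, ∏ i, v i k (t i) = 0 ↔ ¬ Injective t := by
  have hdet : ∑ k, ∏ i, v i k (t i) = ((1 : Matrix (Fin n) (Fin n) F).submatrix t id).det := by
    simp [hv ((1 : Matrix (Fin n) (Fin n) F).submatrix t id), one_apply]
  rw [hdet]
  constructor
  · intro h0 ht
    set σ := Equiv.ofBijective t (Finite.injective_iff_bijective.mp ht)
    have h := det_permute σ (1 : Matrix (Fin n) (Fin n) F)
    rw [coe_ofBijective, h0, det_one, mul_one] at h
    rcases Int.units_eq_one_or (Perm.sign σ) with h1 | h1 <;> simp [h1] at h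
  · intro ht
    obtain ⟨i, j, hij, hne⟩ : ∃ i j, t i = t j ∧ i ≠ j := by
      simpa [Injective] using ht
    exact det_zero_of_row_eq hne (by ext k; rw [submatrix_apply, submatrix_apply, hij])

theorem add_logb_le_of_pow_mul_le {q R r : ℕ} (hq : 1 < q) (hR : 0 < R) (hr : 0 < r)
    (h : q ^ R * r ≤ q ^ r) : (R : ℝ) + Real.logb q R ≤ r := by
  have hRr : R ≤ r := (Nat.pow_le_pow_iff_right hq).mp ((Nat.le_mul_of_pos_right _ hr).trans h)
  have hq' : (1 : ℝ) < q := by exact_mod_cast hq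
  calc (R : ℝ) + Real.logb q R ≤ R + Real.logb q r := by gcongr
    _ = Real.logb q ((q : ℝ) ^ R * r) := by
        rw [Real.logb_mul (by positivity) (by positivity), Real.logb_pow,
          Real.logb_self_eq_one hq', mul_one]
    _ ≤ Real.logb q ((q : ℝ) ^ r) :=
        Real.logb_le_logb_of_le hq' (by positivity) (by exact_mod_cast h)
    _ = r := by rw [Real.logb_pow, Real.logb_self_eq_one hq', mul_one]

theorem trank_det_finite_field_lower_bound_general (q : ℕ) (n : ℕ) (hn : 5 ≤ n)
    (F : Type*) [Field F] [Fintype F] (hF : Fintype.card F = q)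
    (r : ℕ) (v : Fin n → Fin r → Fin n → F) (hv : IsDetDecomposition F n r v) :
    (n.choose (n / 2) : ℝ) + Real.logb q (n.choose (n / 2)) ≤ (r : ℝ) := by
  classical
  have hP := hv.sum_prod_eq_zero_iff
  obtain ⟨T, -, hT⟩ :=
    exists_subset_card_eq (s := (univ : Finset (Fin n))) (n := n - n / 2) (by simp)
  choose σ hσ using fun S : {S : Finset (Fin n) // #S = #T} =>
    Perm.exists_map_finset_eq T S.1 S.2.symm
  have hcode := card_pow_mul_card_le_of_three_le_hammingNorm
    (Fintype.linearCombination F fun S k => ∏ i ∈ Tᶜ, v i k (σ S i)) fun c hc =>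
      (show 3 ≤ #T by omega).trans <| card_le_hammingNorm_sum_smul_prod_compl hP T
        (fun S S' h => Subtype.ext <| by simpa only [hσ] using h) hc
  rw [Fintype.card_finset_len, Fintype.card_fin, Fintype.card_fin, hT, hF,
    Nat.choose_symm (Nat.div_le_self n 2)] at hcode
  have hr : 0 < r := Nat.pos_of_ne_zero fun h => by
    subst h
    exact (hP id).mp (by simp) injective_id
  exact add_logb_le_of_pow_mul_le (hF ▸ Fintype.one_lt_card)
    (Nat.choose_pos (Nat.div_le_self n 2)) hr hcode

/-- Over the field with `q` elements (`q` a prime power) and for `n ≥ 5`, the tensor rank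
of the `n × n` determinant is at least `C(n,⌊n/2⌋) + log_q(C(n,⌊n/2⌋))`. -/
theorem trank_det_finite_field_lower_bound (q : ℕ) (hq : IsPrimePow q) (n : ℕ) (hn : 5 ≤ n)
    (F : Type*) [Field F] [Fintype F] (hF : Fintype.card F = q)
    (r : ℕ) (v : Fin n → Fin r → Fin n → F) (hv : IsDetDecomposition F n r v) :
    (n.choose (n / 2) : ℝ) + Real.logb q (n.choose (n / 2)) ≤ (r : ℝ) :=
  trank_det_finite_field_lower_bound_general q n hn F hF r v hv
end

section
/- Let q ≥ 2 be a prime power and let F_q be the field with q elements. Then every rank-r tensor decomposition of the 4 × 4 determinant over F_q satisfies: r ≥ 9 if q = 2; r ≥ 8 if q ∈ {3, 4}; and r ≥ 7 for every other prime power q ≥ 5. -/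
/-!
Fix the first row of a `4 × 4` matrix to a nonzero `a` with `a t ≠ 0` and take the other rows in
the hyperplane `x t = 0`: the determinant becomes `± a t` times a `3 × 3` determinant, so a
decomposition of `det₄` yields one of `det₃` whose terms are those `k` with `v 0 k ⬝ᵥ a ≠ 0`.
Some `a ≠ 0` is orthogonal to any three first-row forms, and over `𝔽₂` averaging over `a` finds one
orthogonal to four of eight; so it suffices that `det₃` has no decomposition with four terms.

For `x ⬝ᵥ y ⨯₃ z = ∑ₖ (pₖ ⬝ᵥ x) (qₖ ⬝ᵥ y) (sₖ ⬝ᵥ z)`, putting `y = z` shows that the vector of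
values `(qₖ ⬝ᵥ z) (sₖ ⬝ᵥ z)` lies in the kernel of `λ ↦ ∑ₖ λₖ pₖ`, a line because the `pₖ` span.
Rigidity of products of linear forms then places every `qₖ ⊗ sₖ` in the span of some `u ⊗ w` and
`w ⊗ u`, and a nonzero `x` orthogonal to the two resulting coefficient vectors has
`x ⬝ᵥ y ⨯₃ z = 0` for all `y, z`.
-/

open Matrix Finset

section LinearForms

variable {F V : Type*} [Field F] [AddCommGroup V] [Module F V]

theorem LinearMap.eqOn_zero_or_eqOn_zero_of_mul_eq_zero {f g : V →ₗ[F] F} {P : Submodule F V}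
    (h : ∀ x ∈ P, f x * g x = 0) : (∀ x ∈ P, f x = 0) ∨ (∀ x ∈ P, g x = 0) := by
  by_contra! ⟨⟨x, hx, hfx⟩, ⟨y, hy, hgy⟩⟩
  have hgx : g x = 0 := (mul_eq_zero.mp (h x hx)).resolve_left hfx
  have hfy : f y = 0 := (mul_eq_zero.mp (h y hy)).resolve_right hgy
  have := h (x + y) (P.add_mem hx hy)
  simp only [map_add, hgx, hfy, add_zero, zero_add] at this
  exact mul_ne_zero hfx hgy this

theorem LinearMap.exists_smul_eq_of_ker_le {f g : V →ₗ[F] F}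
    (h : LinearMap.ker f ≤ LinearMap.ker g) : ∃ μ : F, μ • f = g := by
  have : g ∈ Submodule.span F (Set.range fun _ : Unit => f) :=
    mem_span_of_iInf_ker_le_ker (by simpa using h)
  simpa [Set.range_const, Submodule.mem_span_singleton] using this

theorem LinearMap.mul_apply_eq_of_ker_le {f g f' g' : V →ₗ[F] F} (hf : f ≠ 0)
    (h : ∀ x, f x * g x = f' x * g' x) (hker : LinearMap.ker f ≤ LinearMap.ker f') :
    ∀ x y, f' x * g' y = f x * g y := by
  obtain ⟨μ, rfl⟩ := exists_smul_eq_of_ker_le hker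
  have hfg : ∀ x ∈ (⊤ : Submodule F V), f x * (g - μ • g') x = 0 := fun x _ => by
    have := h x
    simp only [sub_apply, smul_apply, smul_eq_mul] at this ⊢
    linear_combination this
  obtain hf0 | hg := eqOn_zero_or_eqOn_zero_of_mul_eq_zero hfg
  · exact absurd (LinearMap.ext fun x => hf0 x trivial) hf
  · intro x y
    have := hg y trivial
    simp only [sub_apply, smul_apply, smul_eq_mul, sub_eq_zero] at this
    rw [smul_apply, smul_eq_mul, this]
    ring

/-- Products are compared pointwise rather than as symmetric tensors, so that characteristic `2`
is covered. -/
theorem LinearMap.mul_apply_eq_or_of_mul_apply_eq {f g f' g' : V →ₗ[F] F}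
    (h : ∀ x, f x * g x = f' x * g' x) :
    (∀ x y, f' x * g' y = f x * g y) ∨ (∀ x y, f' x * g' y = g x * f y) := by
  by_cases hf : f = 0
  · subst hf
    have h0 : ∀ x ∈ (⊤ : Submodule F V), f' x * g' x = 0 := fun x _ => by simpa using (h x).symm
    left
    rcases eqOn_zero_or_eqOn_zero_of_mul_eq_zero h0 with h' | h' <;> simp [h' _ trivial]
  have hker : ∀ x ∈ LinearMap.ker f, f' x * g' x = 0 := fun x hx => by
    rw [← h x, LinearMap.mem_ker.mp hx, zero_mul]
  rcases eqOn_zero_or_eqOn_zero_of_mul_eq_zero hker with h' | h'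
  · exact .inl (mul_apply_eq_of_ker_le hf h fun x hx => h' x hx)
  · refine .inr fun x y => ?_
    have := mul_apply_eq_of_ker_le hf (fun x => (h x).trans (mul_comm _ _))
      (fun x hx => h' x hx) y x
    rw [mul_comm, this, mul_comm]

end LinearForms

section Determinant

variable {F : Type*} [Field F]

theorem exists_ne_zero_forall_dotProduct_eq_zero {κ ι : Type*} [Fintype κ] [Fintype ι]
    (w : κ → ι → F) (h : Fintype.card κ < Fintype.card ι) : ∃ a ≠ 0, ∀ k, w k ⬝ᵥ a = 0 := by
  have hker : LinearMap.ker (Matrix.of w).mulVecLin ≠ ⊥ :=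
    LinearMap.ker_ne_bot_of_finrank_lt (by simpa using h)
  obtain ⟨a, ha, ha0⟩ := (Submodule.ne_bot_iff _).mp hker
  exact ⟨a, ha0, fun k => congrFun (LinearMap.mem_ker.mp ha) k⟩

theorem exists_dotProduct_mul_eq_add_of_mul_eq {ι : Type*} [Fintype ι] [DecidableEq ι]
    {b c u w : ι → F} {μ : F} (hμ : μ ≠ 0) (ν : F)
    (h : ∀ z, μ * (b ⬝ᵥ z * c ⬝ᵥ z) = ν * (u ⬝ᵥ z * w ⬝ᵥ z)) :
    ∃ α β : F, ∀ y z, b ⬝ᵥ y * c ⬝ᵥ z = α * (u ⬝ᵥ y * w ⬝ᵥ z) + β * (w ⬝ᵥ y * u ⬝ᵥ z) := by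
  let D := dotProductEquiv F ι
  have hprod : ∀ z, D (ν • u) z * D w z = D (μ • b) z * D c z := fun z => by
    simpa [D, mul_assoc] using (h z).symm
  rcases LinearMap.mul_apply_eq_or_of_mul_apply_eq hprod with h' | h'
  · refine ⟨μ⁻¹ * ν, 0, fun y z => ?_⟩
    have := h' y z
    simp only [D, dotProductEquiv_apply_apply, smul_dotProduct, smul_eq_mul] at this
    field_simp
    linear_combination this
  · refine ⟨0, μ⁻¹ * ν, fun y z => ?_⟩
    have := h' y z
    simp only [D, dotProductEquiv_apply_apply, smul_dotProduct, smul_eq_mul] at this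
    field_simp
    linear_combination this

theorem eq_zero_of_forall_dotProduct_cross_eq_zero {a : Fin 3 → F}
    (h : ∀ y z, a ⬝ᵥ y ⨯₃ z = 0) : a = 0 := by
  have h0 := h (Pi.single 1 1) (Pi.single 2 1)
  have h1 := h (Pi.single 2 1) (Pi.single 0 1)
  have h2 := h (Pi.single 0 1) (Pi.single 1 1)
  simp [cross_apply, dotProduct, Fin.sum_univ_three] at h0 h1 h2
  ext i; fin_cases i <;> assumption

theorem not_forall_dotProduct_cross_eq_add (A B : Fin 3 → F)
    (f g : (Fin 3 → F) → (Fin 3 → F) → F) :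
    ¬ ∀ x y z, x ⬝ᵥ y ⨯₃ z = A ⬝ᵥ x * f y z + B ⬝ᵥ x * g y z := by
  intro h
  obtain ⟨a, ha, hAB⟩ := exists_ne_zero_forall_dotProduct_eq_zero ![A, B] (by simp)
  refine ha (eq_zero_of_forall_dotProduct_cross_eq_zero fun y z => ?_)
  have hA : A ⬝ᵥ a = 0 := by simpa using hAB 0
  have hB : B ⬝ᵥ a = 0 := by simpa using hAB 1
  rw [h, hA, hB]
  ring

theorem exists_proportional_of_triple_product_eq_sum {p q s : Fin 4 → Fin 3 → F}
    (h : ∀ x y z, x ⬝ᵥ y ⨯₃ z = ∑ k, p k ⬝ᵥ x * (q k ⬝ᵥ y * s k ⬝ᵥ z)) :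
    ∃ l : Fin 4 → F, l ≠ 0 ∧ ∀ z, ∃ c : F, ∀ k, q k ⬝ᵥ z * s k ⬝ᵥ z = c * l k := by
  let P : Matrix (Fin 4) (Fin 3) F := Matrix.of p
  have hinj : Function.Injective P.mulVecLin := by
    rw [← LinearMap.ker_eq_bot, Submodule.eq_bot_iff]
    intro a ha
    refine eq_zero_of_forall_dotProduct_cross_eq_zero fun y z => ?_
    rw [h]
    refine sum_eq_zero fun k _ => ?_
    have : p k ⬝ᵥ a = 0 := congrFun (LinearMap.mem_ker.mp ha) k
    rw [this, zero_mul]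
  have hrank : Module.finrank F (LinearMap.ker Pᵀ.mulVecLin) = 1 := by
    have h1 := LinearMap.finrank_range_add_finrank_ker Pᵀ.mulVecLin
    have h2 : P.rank = 3 := by rw [Matrix.rank, LinearMap.finrank_range_of_inj hinj]; simp
    rw [← Matrix.rank, rank_transpose, h2] at h1
    simp at h1
    omega
  obtain ⟨⟨l, _⟩, hl0, hl⟩ := finrank_eq_one_iff'.mp hrank
  refine ⟨l, by simpa using hl0, fun z => ?_⟩
  have hQ : (fun k => q k ⬝ᵥ z * s k ⬝ᵥ z) ∈ LinearMap.ker Pᵀ.mulVecLin := by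
    rw [LinearMap.mem_ker, mulVecLin_apply]
    funext j
    have := h (Pi.single j 1) z z
    simp only [cross_self, dotProduct_zero, dotProduct_single, mul_one] at this
    simpa [P, mulVec, dotProduct] using this.symm
  obtain ⟨c, hc⟩ := hl ⟨_, hQ⟩
  exact ⟨c, fun k => by simpa using (congrFun (congrArg Subtype.val hc) k).symm⟩

theorem not_isDetDecomposition_three_four (v : Fin 3 → Fin 4 → Fin 3 → F) :
    ¬ IsDetDecomposition F 3 4 v := by
  intro hv
  have h : ∀ x y z, x ⬝ᵥ y ⨯₃ z = ∑ k, v 0 k ⬝ᵥ x * (v 1 k ⬝ᵥ y * v 2 k ⬝ᵥ z) := by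
    intro x y z
    rw [triple_product_eq_det]
    refine (hv (of ![x, y, z])).trans ?_
    simp [Fin.prod_univ_three, dotProduct, mul_assoc]
  obtain ⟨l, hl0, hl⟩ := exists_proportional_of_triple_product_eq_sum h
  obtain ⟨k₀, hk₀⟩ : ∃ k₀, l k₀ ≠ 0 := Function.ne_iff.mp hl0
  set u := v 1 k₀
  set w := v 2 k₀
  have hspan : ∀ k, ∃ α β : F, ∀ y z,
      v 1 k ⬝ᵥ y * v 2 k ⬝ᵥ z = α * (u ⬝ᵥ y * w ⬝ᵥ z) + β * (w ⬝ᵥ y * u ⬝ᵥ z) := by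
    refine fun k => exists_dotProduct_mul_eq_add_of_mul_eq hk₀ (l k) fun z => ?_
    obtain ⟨c, hc⟩ := hl z
    rw [hc k, hc k₀]
    ring
  choose α β hαβ using hspan
  refine not_forall_dotProduct_cross_eq_add (∑ k, α k • v 0 k) (∑ k, β k • v 0 k)
    (fun y z => u ⬝ᵥ y * w ⬝ᵥ z) (fun y z => w ⬝ᵥ y * u ⬝ᵥ z) fun x y z => ?_
  simp only [h, hαβ, sum_dotProduct, smul_dotProduct, smul_eq_mul, sum_mul, ← sum_add_distrib]
  exact sum_congr rfl fun k _ => by ring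

theorem det_vecCons_insertNth_zero {R : Type*} [CommRing R] {n : ℕ} (a : Fin (n + 1) → R)
    (t : Fin (n + 1)) (X : Matrix (Fin n) (Fin n) R) :
    (of (vecCons a fun i => Fin.insertNth t 0 (X i)) : Matrix _ _ R).det
      = (-1) ^ (t : ℕ) * a t * X.det := by
  rw [det_succ_column _ t, Fin.sum_univ_succ]
  simp [submatrix]
  rfl

theorem dotProduct_insertNth_zero {R : Type*} [CommRing R] {n : ℕ} (b : Fin (n + 1) → R)
    (t : Fin (n + 1)) (x : Fin n → R) :
    b ⬝ᵥ Fin.insertNth t 0 x = (b ∘ t.succAbove) ⬝ᵥ x := by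
  simp [dotProduct, Fin.sum_univ_succAbove _ t]

theorem isDetDecomposition_iff {n r : ℕ} {v : Fin n → Fin r → Fin n → F} :
    IsDetDecomposition F n r v ↔ ∀ A : Matrix (Fin n) (Fin n) F,
      A.det = ∑ k, ∏ i, v i k ⬝ᵥ A i :=
  Iff.rfl

theorem IsDetDecomposition.exists_of_le {n r m : ℕ} {v : Fin (n + 1) → Fin r → Fin (n + 1) → F}
    (hv : IsDetDecomposition F (n + 1) r v) (h : r ≤ m) :
    ∃ w, IsDetDecomposition F (n + 1) m w := by
  refine ⟨fun i k => if hk : (k : ℕ) < r then v i ⟨k, hk⟩ else 0, fun A => ?_⟩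
  let f : ℕ → F := fun k => if hk : k < r then ∏ i, v i ⟨k, hk⟩ ⬝ᵥ A i else 0
  have hf : ∀ k : Fin m, ∏ i, (if hk : (k : ℕ) < r then v i ⟨k, hk⟩ else 0) ⬝ᵥ A i = f k := by
    intro k
    by_cases hk : (k : ℕ) < r <;> simp [f, hk]
  rw [hv A]
  change _ = ∑ k : Fin m, ∏ i, (if hk : (k : ℕ) < r then v i ⟨k, hk⟩ else 0) ⬝ᵥ A i
  rw [sum_congr rfl fun k _ => hf k, Fin.sum_univ_eq_sum_range f,
    ← sum_subset (range_subset_range.mpr h) fun k _ hk => dif_neg (by simpa using hk),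
    ← Fin.sum_univ_eq_sum_range f]
  simp [f, dotProduct]

theorem exists_isDetDecomposition_of_det_eq_sum_s14 {κ : Type*} {n : ℕ} (S : Finset κ) (γ : κ → F)
    (u : Fin (n + 1) → κ → Fin (n + 1) → F)
    (h : ∀ X : Matrix (Fin (n + 1)) (Fin (n + 1)) F,
      X.det = ∑ k ∈ S, γ k * ∏ i, u i k ⬝ᵥ X i) :
    ∃ w, IsDetDecomposition F (n + 1) #S w := by
  let e : Fin #S ≃ S := S.equivFin.symm
  refine ⟨fun i j => Fin.cases (γ (e j) • u 0 (e j)) (fun i => u i.succ (e j)) i,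
    isDetDecomposition_iff.mpr fun X => ?_⟩
  rw [h X, ← sum_coe_sort S, ← e.sum_comp]
  refine sum_congr rfl fun j _ => ?_
  simp [Fin.prod_univ_succ, smul_dotProduct, mul_assoc]

theorem IsDetDecomposition.exists_restrict [DecidableEq F] {n r : ℕ}
    {v : Fin (n + 2) → Fin r → Fin (n + 2) → F} (hv : IsDetDecomposition F (n + 2) r v)
    {a : Fin (n + 2) → F} (ha : a ≠ 0) :
    ∃ w, IsDetDecomposition F (n + 1) #{k | v 0 k ⬝ᵥ a ≠ 0} w := by
  obtain ⟨t, ht⟩ : ∃ t, a t ≠ 0 := Function.ne_iff.mp ha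
  have hc : (-1) ^ (t : ℕ) * a t ≠ 0 := mul_ne_zero (pow_ne_zero _ (neg_ne_zero.mpr one_ne_zero)) ht
  refine exists_isDetDecomposition_of_det_eq_sum_s14 _ (fun k => ((-1) ^ (t : ℕ) * a t)⁻¹ * v 0 k ⬝ᵥ a)
    (fun i k => v i.succ k ∘ t.succAbove) fun X => ?_
  have hX : (-1) ^ (t : ℕ) * a t * X.det
      = ∑ k, v 0 k ⬝ᵥ a * ∏ i, (v i.succ k ∘ t.succAbove) ⬝ᵥ X i := by
    rw [← det_vecCons_insertNth_zero, isDetDecomposition_iff.mp hv]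
    have hrow : ∀ i, of (vecCons a fun i => Fin.insertNth t 0 (X i)) i
        = vecCons a (fun i => Fin.insertNth t 0 (X i)) i := fun _ => rfl
    simp [Fin.prod_univ_succ, hrow, dotProduct_insertNth_zero]
  rw [sum_filter_of_ne fun k _ hk => by contrapose! hk; simp [hk]]
  simp_rw [mul_assoc, ← mul_sum, ← hX]
  field_simp

theorem exists_ne_zero_card_dotProduct_ne_zero_le_of_sub_lt [DecidableEq F] {ι : Type*} [Fintype ι]
    {r m : ℕ} (w : Fin r → ι → F) (h : r - m < Fintype.card ι) :
    ∃ a ≠ 0, #{k | w k ⬝ᵥ a ≠ 0} ≤ m := by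
  obtain ⟨a, ha, hw⟩ := exists_ne_zero_forall_dotProduct_eq_zero
    (fun j : Fin (r - m) => w ⟨m + j, by omega⟩) (by rw [Fintype.card_fin]; omega)
  refine ⟨a, ha, ?_⟩
  have hlt : ∀ k ∈ ({k | w k ⬝ᵥ a ≠ 0} : Finset (Fin r)), (k : ℕ) ∈ range m := by
    intro k hk
    by_contra hkm
    rw [mem_range, not_lt] at hkm
    have := hw ⟨k - m, by omega⟩
    simp only [Nat.add_sub_cancel' hkm] at this
    exact (mem_filter.mp hk).2 this
  simpa using card_le_card_of_injOn Fin.val hlt Fin.val_injective.injOn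

theorem card_dotProduct_ne_zero_le [Fintype F] [DecidableEq F] {n : ℕ} (b : Fin (n + 1) → F) :
    #{a | b ⬝ᵥ a ≠ 0} ≤ Fintype.card F ^ (n + 1) - Fintype.card F ^ n := by
  let f := dotProductEquiv F (Fin (n + 1)) b
  have hfin : n ≤ Module.finrank F (LinearMap.ker f) := by
    have h1 := LinearMap.finrank_range_add_finrank_ker f
    have h2 := Submodule.finrank_le (LinearMap.range f)
    simp only [Module.finrank_self, Module.finrank_fin_fun] at h1 h2
    omega
  have hcard : Fintype.card F ^ n ≤ #{a | b ⬝ᵥ a = 0} := by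
    calc Fintype.card F ^ n ≤ Fintype.card F ^ Module.finrank F (LinearMap.ker f) :=
          Nat.pow_le_pow_right Fintype.card_pos hfin
      _ = Nat.card (LinearMap.ker f) := by
          rw [Module.natCard_eq_pow_finrank (K := F), Nat.card_eq_fintype_card]
      _ = #{a | b ⬝ᵥ a = 0} := by
          rw [← Fintype.card_subtype, ← Nat.card_eq_fintype_card]; rfl
  have hsplit := card_filter_add_card_filter_not (s := univ) (p := fun a => b ⬝ᵥ a = 0)
  simp only [card_univ, Fintype.card_fun, Fintype.card_fin] at hsplit
  simp only [ne_eq]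
  omega

theorem exists_ne_zero_mul_card_dotProduct_ne_zero_le [Fintype F] [DecidableEq F] {κ : Type*}
    [Fintype κ] {n : ℕ} (w : κ → Fin (n + 1) → F) :
    ∃ a ≠ 0, (Fintype.card F ^ (n + 1) - 1) * #{k | w k ⬝ᵥ a ≠ 0}
      ≤ Fintype.card κ * (Fintype.card F ^ (n + 1) - Fintype.card F ^ n) := by
  set q := Fintype.card F
  have hsum : ∑ a ∈ univ.erase 0, #{k | w k ⬝ᵥ a ≠ 0}
      ≤ Fintype.card κ * (q ^ (n + 1) - q ^ n) :=
    calc ∑ a ∈ univ.erase 0, #{k | w k ⬝ᵥ a ≠ 0} = ∑ a, #{k | w k ⬝ᵥ a ≠ 0} :=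
          sum_erase _ (by simp)
      _ = ∑ k, #{a | w k ⬝ᵥ a ≠ 0} := by simp only [card_filter]; exact sum_comm
      _ ≤ ∑ _k : κ, (q ^ (n + 1) - q ^ n) := sum_le_sum fun k _ => card_dotProduct_ne_zero_le (w k)
      _ = _ := by simp
  obtain ⟨a, ha, hle⟩ := exists_le_of_sum_le (s := univ.erase 0)
    (f := fun a => (q ^ (n + 1) - 1) * #{k | w k ⬝ᵥ a ≠ 0})
    (g := fun _ => Fintype.card κ * (q ^ (n + 1) - q ^ n))
    ⟨Pi.single 0 1, by simp⟩ (by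
      rw [← mul_sum, sum_const, card_erase_of_mem (mem_univ _), card_univ, Fintype.card_fun,
        Fintype.card_fin, smul_eq_mul]
      exact Nat.mul_le_mul_left _ hsum)
  exact ⟨a, ne_of_mem_erase ha, hle⟩

theorem IsDetDecomposition.four_lt_card_dotProduct_ne_zero [DecidableEq F] {r : ℕ}
    {v : Fin 4 → Fin r → Fin 4 → F} (hv : IsDetDecomposition F 4 r v) {a : Fin 4 → F}
    (ha : a ≠ 0) : 4 < #{k | v 0 k ⬝ᵥ a ≠ 0} := by
  by_contra! h
  obtain ⟨w, hw⟩ := hv.exists_restrict ha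
  obtain ⟨w', hw'⟩ := hw.exists_of_le h
  exact not_isDetDecomposition_three_four w' hw'

end Determinant

theorem trank_det_four_finite_field_lb_general (q : ℕ)
    (F : Type*) [Field F] [Fintype F] (hF : Fintype.card F = q)
    (r : ℕ) (v : Fin 4 → Fin r → Fin 4 → F) (hv : IsDetDecomposition F 4 r v) :
    (q = 2 → 9 ≤ r) ∧ ((q = 3 ∨ q = 4) → 8 ≤ r) ∧ (5 ≤ q → 7 ≤ r) := by
  classical
  have h8 : 8 ≤ r := by
    by_contra! hr
    obtain ⟨a, ha, hS⟩ := exists_ne_zero_card_dotProduct_ne_zero_le_of_sub_lt (m := 4) (v 0)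
      (by simp only [Fintype.card_fin]; omega)
    exact (hv.four_lt_card_dotProduct_ne_zero ha).not_ge hS
  refine ⟨fun hq => ?_, fun _ => h8, fun _ => by omega⟩
  by_contra! hr
  obtain ⟨a, ha, hS⟩ := exists_ne_zero_mul_card_dotProduct_ne_zero_le (n := 3) (v 0)
  have := hv.four_lt_card_dotProduct_ne_zero ha
  rw [hF, hq, Fintype.card_fin] at hS
  omega

/-- Lower bounds on the tensor rank of the `4 × 4` determinant over the field with
`q` elements: `r ≥ 9` if `q = 2`, `r ≥ 8` if `q ∈ {3,4}`, and `r ≥ 7` if `q ≥ 5`. -/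
theorem trank_det_four_finite_field_lb (q : ℕ) (hq : IsPrimePow q)
    (F : Type*) [Field F] [Fintype F] (hF : Fintype.card F = q)
    (r : ℕ) (v : Fin 4 → Fin r → Fin 4 → F) (hv : IsDetDecomposition F 4 r v) :
    (q = 2 → 9 ≤ r) ∧ ((q = 3 ∨ q = 4) → 8 ≤ r) ∧ (5 ≤ q → 7 ≤ r) :=
  trank_det_four_finite_field_lb_general q F hF r v hv
end

section
/- Let F_2 be the field with two elements, and suppose v_{i,k} ∈ F_2^4 (1 ≤ i ≤ 4, 1 ≤ k ≤ r) form a rank-r tensor decomposition of the 4 × 4 determinant over F_2 with r minimal (i.e., no rank-r' decomposition exists for r' < r). For each k define the rank-1 matrix A_k = v_{1,k} · v_{2,k}^T. Then for every pair of (not necessarily distinct) nonzero vectors u, w ∈ F_2^4, the number of indices k ∈ {1,…,r} with u^T A_k w = 1 is not equal to 1. -/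
open Matrix

theorem exists_dotProduct_ne_zero_and_ne_zero {R ι : Type*} [NonAssocSemiring R] [Fintype ι]
    [DecidableEq ι] {p q : ι → R} (hp : p ≠ 0) (hq : q ≠ 0) :
    ∃ x : ι → R, p ⬝ᵥ x ≠ 0 ∧ q ⬝ᵥ x ≠ 0 := by
  have nonroot {f : ι → R} (hf : f ≠ 0) : ∃ a : ι → R, f ⬝ᵥ a ≠ 0 := by
    obtain ⟨i, hi⟩ := Function.ne_iff.mp hf
    exact ⟨Pi.single i 1, by simpa [dotProduct_single] using hi⟩
  obtain ⟨a, ha⟩ := nonroot hp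
  obtain ⟨b, hb⟩ := nonroot hq
  by_cases hqa : q ⬝ᵥ a = 0
  · by_cases hpb : p ⬝ᵥ b = 0
    · exact ⟨a + b, by simpa [dotProduct_add, hpb] using ha,
        by simpa [dotProduct_add, hqa] using hb⟩
    · exact ⟨b, hpb, hb⟩
  · exact ⟨a, ha, hqa⟩

theorem ZMod.sum_mul_eq_sum_filter_eq_one {ι : Type*} [Fintype ι] (f g : ι → ZMod 2) :
    ∑ k, f k * g k = ∑ k ∈ Finset.univ.filter (fun k => f k = 1), g k := by
  rw [Finset.sum_filter]
  refine Finset.sum_congr rfl fun k _ => ?_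
  generalize f k = a
  generalize g k = b
  revert a b
  decide

theorem sum_sum_mul_mul_eq_dotProduct_mul_dotProduct {R ι : Type*} [CommSemiring R] [Fintype ι]
    (u w p q : ι → R) :
    ∑ a, ∑ b, u a * (p a * q b) * w b = (p ⬝ᵥ u) * (q ⬝ᵥ w) := by
  rw [dotProduct, dotProduct, Finset.sum_mul_sum]
  exact Finset.sum_congr rfl fun a _ => Finset.sum_congr rfl fun b _ => by ring

namespace IsDetDecomposition

variable {F : Type*} [Field F] {n r : ℕ}

theorem comp_succAbove_of_eq_zero {v : Fin n → Fin (r + 1) → Fin n → F}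
    (hv : IsDetDecomposition F n (r + 1) v)
    {i₀ : Fin n} {k₀ : Fin (r + 1)} (h : v i₀ k₀ = 0) :
    IsDetDecomposition F n r (fun i k => v i (k₀.succAbove k)) := by
  intro A
  rw [hv A, Fin.sum_univ_succAbove _ k₀,
    Finset.prod_eq_zero (Finset.mem_univ i₀) (by simp [h]), zero_add]

theorem ne_zero_of_minimal {v : Fin n → Fin r → Fin n → F} (hv : IsDetDecomposition F n r v)
    (hmin : ∀ r' : ℕ, r' < r → ∀ v' : Fin n → Fin r' → Fin n → F,
      ¬ IsDetDecomposition F n r' v')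
    (i : Fin n) (k : Fin r) : v i k ≠ 0 := by
  intro h
  obtain ⟨r', rfl⟩ : ∃ r', r = r' + 1 := Nat.exists_eq_add_one_of_ne_zero k.pos.ne'
  exact hmin r' r'.lt_succ_self _ (hv.comp_succAbove_of_eq_zero h)

theorem sum_eq_zero_of_last_rows_eq {v : Fin 4 → Fin r → Fin 4 → F}
    (hv : IsDetDecomposition F 4 r v) (u w x : Fin 4 → F) :
    ∑ k, (v 0 k ⬝ᵥ u) * (v 1 k ⬝ᵥ w) * ((v 2 k ⬝ᵥ x) * (v 3 k ⬝ᵥ x)) = 0 := by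
  have hdet : (Matrix.of ![u, w, x, x]).det = 0 :=
    Matrix.det_zero_of_row_eq (i := 2) (j := 3) (by decide) rfl
  rw [hv] at hdet
  simpa [Fin.prod_univ_four, dotProduct, mul_assoc] using hdet

end IsDetDecomposition

theorem minimal_decomposition_bilinear_count_ne_one_general
    (r : ℕ) (v : Fin 4 → Fin r → Fin 4 → ZMod 2)
    (hv : IsDetDecomposition (ZMod 2) 4 r v)
    (hmin : ∀ r' : ℕ, r' < r → ∀ v' : Fin 4 → Fin r' → Fin 4 → ZMod 2,
      ¬ IsDetDecomposition (ZMod 2) 4 r' v')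
    (u w : Fin 4 → ZMod 2) :
    (Finset.univ.filter fun k : Fin r =>
      (∑ a : Fin 4, ∑ b : Fin 4, u a * (v 0 k a * v 1 k b) * w b) = 1).card ≠ 1 := by
  simp only [sum_sum_mul_mul_eq_dotProduct_mul_dotProduct]
  intro hcard
  obtain ⟨k₀, hk₀⟩ := Finset.card_eq_one.mp hcard
  obtain ⟨x, h2, h3⟩ := exists_dotProduct_ne_zero_and_ne_zero
    (hv.ne_zero_of_minimal hmin 2 k₀) (hv.ne_zero_of_minimal hmin 3 k₀)
  have hzero := hv.sum_eq_zero_of_last_rows_eq u w x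
  rw [ZMod.sum_mul_eq_sum_filter_eq_one, hk₀, Finset.sum_singleton] at hzero
  exact mul_ne_zero h2 h3 hzero

/-- In a minimal tensor decomposition of the `4 × 4` determinant over `𝔽₂`, for every pair
of nonzero vectors `u, w`, the number of indices `k` with `uᵀ (v₁ₖ v₂ₖᵀ) w = 1` is not `1`. -/
theorem minimal_decomposition_bilinear_count_ne_one
    (r : ℕ) (v : Fin 4 → Fin r → Fin 4 → ZMod 2)
    (hv : IsDetDecomposition (ZMod 2) 4 r v)
    (hmin : ∀ r' : ℕ, r' < r → ∀ v' : Fin 4 → Fin r' → Fin 4 → ZMod 2,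
      ¬ IsDetDecomposition (ZMod 2) 4 r' v')
    (u w : Fin 4 → ZMod 2) (hu : u ≠ 0) (hw : w ≠ 0) :
    (Finset.univ.filter fun k : Fin r =>
      (∑ a : Fin 4, ∑ b : Fin 4, u a * (v 0 k a * v 1 k b) * w b) = 1).card ≠ 1 :=
  minimal_decomposition_bilinear_count_ne_one_general r v hv hmin u w
end

section
/- Let R be a commutative ring, let n be a positive integer, and let A be an n × n matrix over R. For each i ∈ [n], define a_{i,0} := −Σ_{j=1}^n a_{i,j}. Then det(A) = (−1)^n Σ_T Π_{i=1}^n a_{i, j_i}, where the sum ranges over all in-trees T = (j_1, j_2, …, j_n) on the vertex set {0, 1, …, n} rooted at 0. -/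
/-!
Write `a_{i,m}` for the extended entries, so that `∑ₘ a_{i,m} = 0`. Then row `i` of `-A` is
`∑ₘ a_{i,m} (e_i - e_m)` with `e_0 = 0`, and multilinearity of the determinant gives
`det (-A) = ∑_j (∏ᵢ a_{i,jᵢ}) det E_j`, where `E_j` has rows `e_i - e_{jᵢ}`.
If some vertex never reaches `0`, the indicator of those vertices is constant along the edges
`i → jᵢ`, hence a kernel vector of `E_j`, and `det E_j = 0`. Otherwise ordering the vertices by
their distance to the root makes `E_j` triangular with unit diagonal, and `det E_j = 1`.
-/

/-- The step function of the directed graph on `{0,1,…,n}` rooted at `0` specified by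
`j : Fin n → Fin (n+1)` (vertex `i+1` points to `j i`; vertex `0` is a fixed point). -/
def treeStep {n : ℕ} (j : Fin n → Fin (n + 1)) : Fin (n + 1) → Fin (n + 1) :=
  Fin.cases 0 j

open Finset Matrix

theorem Matrix.det_of_sum_smul {R ι κ : Type*} [CommRing R] [Fintype ι] [DecidableEq ι]
    [Fintype κ] (c : ι → κ → R) (v : ι → κ → ι → R) :
    det (of fun i => ∑ m, c i m • v i m) =
      ∑ f : ι → κ, (∏ i, c i (f i)) * det (of fun i => v i (f i)) := by
  change detRowAlternating.toMultilinearMap (fun i => ∑ m, c i m • v i m) = _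
  rw [MultilinearMap.map_sum]
  simp only [MultilinearMap.map_smul_univ, smul_eq_mul]
  rfl

section InTree

variable {n : ℕ} (j : Fin n → Fin (n + 1))

lemma treeStep_succ (i : Fin n) : treeStep j i.succ = j i := rfl

def ReachesRoot (v : Fin (n + 1)) : Prop := ∃ m, (treeStep j)^[m] v = 0

noncomputable def rootDist (v : Fin (n + 1)) : ℕ := sInf {m | (treeStep j)^[m] v = 0}

variable {j}

lemma reachesRoot_zero : ReachesRoot j 0 := ⟨0, rfl⟩

lemma reachesRoot_succ_iff {i : Fin n} : ReachesRoot j i.succ ↔ ReachesRoot j (j i) := by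
  constructor
  · rintro ⟨_ | m, hm⟩
    · exact absurd hm (Fin.succ_ne_zero i)
    · exact ⟨m, hm⟩
  · rintro ⟨m, hm⟩
    exact ⟨m + 1, hm⟩

lemma ne_succ_of_reachesRoot {i : Fin n} (h : ReachesRoot j i.succ) : j i ≠ i.succ := by
  intro hloop
  obtain ⟨m, hm⟩ := h
  rw [Function.iterate_fixed (hloop ▸ treeStep_succ j i) m] at hm
  exact Fin.succ_ne_zero i hm

lemma rootDist_lt {i k : Fin n} (h : ReachesRoot j i.succ) (hik : j i = k.succ) :
    rootDist j k.succ < rootDist j i.succ := by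
  have hreach : (treeStep j)^[rootDist j i.succ] i.succ = 0 := Nat.sInf_mem h
  obtain ⟨d, hd⟩ : ∃ d, rootDist j i.succ = d + 1 := by
    refine Nat.exists_eq_add_one.2 (Nat.pos_of_ne_zero fun h0 => ?_)
    rw [h0] at hreach
    exact Fin.succ_ne_zero i hreach
  rw [hd, Function.iterate_succ_apply, treeStep_succ, hik] at hreach
  rw [hd]
  exact Nat.lt_succ_of_le (Nat.sInf_le hreach)

end InTree

section EdgeMatrix

variable (R : Type*) [CommRing R] {n : ℕ}

def edgeRow (i : Fin n) (m : Fin (n + 1)) : Fin n → R :=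
  fun k => (if i = k then 1 else 0) - if m = k.succ then 1 else 0

def edgeMatrix (j : Fin n → Fin (n + 1)) : Matrix (Fin n) (Fin n) R :=
  of fun i => edgeRow R i (j i)

variable {R}

lemma sum_smul_edgeRow (i : Fin n) {c : Fin (n + 1) → R} (hc : ∑ m, c m = 0) :
    ∑ m, c m • edgeRow R i m = -fun k => c k.succ := by
  ext k
  simp [edgeRow, Finset.sum_apply, mul_sub, sum_sub_distrib, hc]

lemma edgeRow_dotProduct (i : Fin n) (m : Fin (n + 1)) {y : Fin (n + 1) → R} (hy : y 0 = 0) :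
    edgeRow R i m ⬝ᵥ (fun k => y k.succ) = y i.succ - y m := by
  simp only [dotProduct, edgeRow, sub_mul, ite_mul, one_mul, zero_mul, sum_sub_distrib,
    sum_ite_eq, mem_univ, if_true]
  congr 1
  cases m using Fin.cases with
  | zero => simp [hy, (Fin.succ_ne_zero _).symm]
  | succ l => simp [Fin.succ_inj]

lemma det_edgeMatrix_of_not_reachesRoot {j : Fin n → Fin (n + 1)} {v : Fin (n + 1)}
    (hv : ¬ ReachesRoot j v) : (edgeMatrix R j).det = 0 := by
  classical
  let y : Fin (n + 1) → R := fun w => if ReachesRoot j w then 0 else 1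
  have hy0 : y 0 = 0 := if_pos reachesRoot_zero
  obtain ⟨i, rfl⟩ : ∃ i : Fin n, i.succ = v :=
    Fin.exists_succ_eq.2 (by rintro rfl; exact hv reachesRoot_zero)
  refine det_eq_zero_of_mulVec_eq_zero_of_mem_nonZeroDivisors (v := fun k => y k.succ) (i := i)
    ?_ (by simp only [y, if_neg hv]; exact one_mem _)
  funext k
  change edgeRow R k (j k) ⬝ᵥ (fun k => y k.succ) = 0
  rw [edgeRow_dotProduct k _ hy0]
  simp only [y, reachesRoot_succ_iff, sub_self]

lemma det_edgeMatrix_of_reachesRoot {j : Fin n → Fin (n + 1)} (hj : ∀ v, ReachesRoot j v) :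
    (edgeMatrix R j).det = 1 := by
  let depth : Fin n → ℕᵒᵈ := fun i => OrderDual.toDual (rootDist j i.succ)
  have htri : (edgeMatrix R j).BlockTriangular depth := by
    intro i k hik
    have hne : j i ≠ k.succ := fun h => (rootDist_lt (hj _) h).not_gt hik
    have hik' : i ≠ k := by rintro rfl; exact lt_irrefl _ hik
    simp [edgeMatrix, edgeRow, hne, hik']
  rw [htri.det]
  refine prod_eq_one fun d _ => ?_
  suffices hblock : (edgeMatrix R j).toSquareBlock depth d = 1 by rw [hblock, det_one]
  ext ⟨i, hi⟩ ⟨k, hk⟩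
  have hne : j i ≠ k.succ := fun h =>
    (rootDist_lt (hj _) h).ne (OrderDual.toDual.injective (hk.trans hi.symm))
  simp [toSquareBlock_def, one_apply, edgeMatrix, edgeRow, hne]

open scoped Classical in
lemma det_edgeMatrix (j : Fin n → Fin (n + 1)) :
    (edgeMatrix R j).det = if ∀ v, ReachesRoot j v then 1 else 0 := by
  split_ifs with h
  · exact det_edgeMatrix_of_reachesRoot h
  · obtain ⟨v, hv⟩ := not_forall.1 h
    exact det_edgeMatrix_of_not_reachesRoot hv

end EdgeMatrix

open scoped Classical in
theorem det_eq_sum_in_trees_general {R : Type*} [CommRing R] {n : ℕ}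
    (A : Matrix (Fin n) (Fin n) R) :
    A.det = (-1 : R) ^ n *
      ∑ j ∈ Finset.univ.filter (fun j : Fin n → Fin (n + 1) =>
          (∀ i : Fin n, j i ≠ i.succ) ∧
          ∀ v : Fin (n + 1), ∃ m : ℕ, (treeStep j)^[m] v = 0),
        ∏ i : Fin n,
          Fin.cases (motive := fun _ => R) (-(∑ k : Fin n, A i k)) (fun k => A i k) (j i) := by
  let a : Fin n → Fin (n + 1) → R :=
    fun i => Fin.cases (motive := fun _ => R) (-(∑ k, A i k)) (fun k => A i k)
  have hrows : -A = of fun i => ∑ m, a i m • edgeRow R i m := by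
    ext i : 1
    rw [of_apply, sum_smul_edgeRow _ (by simp [a, Fin.sum_univ_succ])]
    rfl
  have htrees : univ.filter (fun j : Fin n → Fin (n + 1) =>
      (∀ i, j i ≠ i.succ) ∧ ∀ v, ∃ m, (treeStep j)^[m] v = 0) =
      univ.filter fun j => ∀ v, ReachesRoot j v :=
    filter_congr fun j _ => and_iff_right_of_imp fun h i => ne_succ_of_reachesRoot (h _)
  calc A.det = (-1) ^ n * (-A).det := by
        rw [det_neg, Fintype.card_fin, ← mul_assoc, ← pow_add, Even.neg_one_pow ⟨n, rfl⟩,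
          one_mul]
    _ = (-1) ^ n * ∑ j, (∏ i, a i (j i)) * (edgeMatrix R j).det := by
        rw [hrows, det_of_sum_smul]
        rfl
    _ = _ := by
        simp_rw [htrees, sum_filter, det_edgeMatrix, mul_ite, mul_one, mul_zero]
        rfl

open scoped Classical in
/-- The determinant as a sum over in-trees rooted at `0`: with `a_{i,0} := -Σ_j a_{i,j}`,
`det A = (-1)ⁿ Σ_T Π_i a_{i, jᵢ}` over all in-trees `T = (j₁,…,jₙ)` rooted at `0`. -/
theorem det_eq_sum_in_trees {R : Type*} [CommRing R] {n : ℕ} (hn : 0 < n)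
    (A : Matrix (Fin n) (Fin n) R) :
    A.det = (-1 : R) ^ n *
      ∑ j ∈ Finset.univ.filter (fun j : Fin n → Fin (n + 1) =>
          (∀ i : Fin n, j i ≠ i.succ) ∧
          ∀ v : Fin (n + 1), ∃ m : ℕ, (treeStep j)^[m] v = 0),
        ∏ i : Fin n,
          Fin.cases (motive := fun _ => R) (-(∑ k : Fin n, A i k)) (fun k => A i k) (j i) :=
  det_eq_sum_in_trees_general A
end

section
/- Let n be a positive integer and let B = (n+1)·I − J be the n × n real matrix where I is the identity matrix and J is the all-ones matrix. Then there exists ε > 0 such that for every real n × n matrix A with all entries within ε of the corresponding entries of B, and for all distinct lattice points y, z ∈ Λ_A, the intersection (F_A + y) ∩ (F_A + z) has Lebesgue measure zero. -/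
/-- The lattice `Λ_A = { A v : v ∈ ℤⁿ }` generated by the columns of `A`. -/
def latticeOf {n : ℕ} (A : Matrix (Fin n) (Fin n) ℝ) : Set (Fin n → ℝ) :=
  { x | ∃ v : Fin n → ℤ, x = A.mulVec fun i => (v i : ℝ) }

/-- The cuboid `C_A = Π_i [0, a_{i,i}]`. -/
def cuboid {n : ℕ} (A : Matrix (Fin n) (Fin n) ℝ) : Set (Fin n → ℝ) :=
  Set.univ.pi fun i => Set.Icc 0 (A i i)

/-- The tile `F_A`: the closure of `C_A` minus its translates by column sums over
nonempty subsets of `[n]`. -/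
def FA {n : ℕ} (A : Matrix (Fin n) (Fin n) ℝ) : Set (Fin n → ℝ) :=
  closure (cuboid A \
    ⋃ (S : Finset (Fin n)) (_ : S.Nonempty),
      (fun x : Fin n → ℝ => x + fun r => ∑ i ∈ S, A r i) '' cuboid A)

/-! Near `B`, the matrix `A` has nonpositive off-diagonal entries and nonnegative row sums, and
if `C_A` meets `C_A + A v` then the integer vector `v` takes at most two consecutive values
(compare `A v` with `B v = (n + 1) v - (∑ᵢ vᵢ) 𝟙`). For such a `v ≥ 0`, every point of `C_A` lying
above `A v` lies in a translate `C_A + A 1_S` with `S ≠ ∅`, which is found greedily starting from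
the set where `v` is maximal; the case `v ≤ 0` is symmetric. Hence every point of
`F_A ∩ (F_A + A v)` lies on the frontier of one of the finitely many boxes `C_A + A 1_S` or of its
translate by `A v`, and frontiers of convex sets are null. -/

open Finset MeasureTheory Matrix

variable {n : ℕ}

lemma image_add_inter_image_add {G : Type*} [AddCommGroup G] (s : Set G) (y z : G) :
    (· + y) '' s ∩ (· + z) '' s = (· + y) '' (s ∩ (· + (z - y)) '' s) := by
  rw [Set.image_inter (add_left_injective y), Set.image_image]
  simp only [add_assoc, sub_add_cancel]

lemma volume_image_add (c : Fin n → ℝ) (s : Set (Fin n → ℝ)) :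
    volume ((· + c) '' s) = volume s := by
  rw [Set.image_add_right, measure_preimage_add_right]

/-- `colSum A S = A 1_S`, the vectors by which `F_A` removes translates of `C_A`. -/
def colSum (A : Matrix (Fin n) (Fin n) ℝ) (S : Finset (Fin n)) : Fin n → ℝ :=
  fun r => ∑ i ∈ S, A r i

lemma image_add_cuboid (A : Matrix (Fin n) (Fin n) ℝ) (c : Fin n → ℝ) :
    (· + c) '' cuboid A = Set.univ.pi fun i => Set.Icc (c i) (A i i + c i) := by
  ext x
  simp only [cuboid, Set.image_add_right, Set.mem_preimage, Set.mem_univ_pi, Set.mem_Icc,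
    Pi.add_apply, Pi.neg_apply]
  refine forall_congr' fun i => ?_
  constructor <;> rintro ⟨h₁, h₂⟩ <;> constructor <;> linarith

lemma mem_image_add_cuboid {A : Matrix (Fin n) (Fin n) ℝ} {c x : Fin n → ℝ} :
    x ∈ (· + c) '' cuboid A ↔ ∀ i, c i ≤ x i ∧ x i ≤ A i i + c i := by
  simp only [image_add_cuboid, Set.mem_univ_pi, Set.mem_Icc]

lemma mem_cuboid {A : Matrix (Fin n) (Fin n) ℝ} {x : Fin n → ℝ} :
    x ∈ cuboid A ↔ ∀ i, 0 ≤ x i ∧ x i ≤ A i i := by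
  simp only [cuboid, Set.mem_univ_pi, Set.mem_Icc]

lemma abs_le_diag_of_mem_cuboid {A : Matrix (Fin n) (Fin n) ℝ} {x w : Fin n → ℝ}
    (hx : x ∈ cuboid A) (hxw : x + w ∈ cuboid A) (i : Fin n) : |w i| ≤ A i i := by
  rw [mem_cuboid] at hx hxw
  have := hxw i
  simp only [Pi.add_apply] at this
  exact abs_le.mpr ⟨by linarith [hx i], by linarith [hx i]⟩

lemma FA_subset_cuboid (A : Matrix (Fin n) (Fin n) ℝ) : FA A ⊆ cuboid A :=
  closure_minimal Set.sdiff_subset (isClosed_set_pi fun _ _ => isClosed_Icc)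

lemma FA_inter_subset_frontier (A : Matrix (Fin n) (Fin n) ℝ) {S : Finset (Fin n)}
    (hS : S.Nonempty) :
    FA A ∩ (· + colSum A S) '' cuboid A ⊆ frontier ((· + colSum A S) '' cuboid A) := by
  rintro x ⟨hxF, hxS⟩
  have hclosed : IsClosed ((· + colSum A S) '' cuboid A) := by
    rw [image_add_cuboid]; exact isClosed_set_pi fun _ _ => isClosed_Icc
  rw [hclosed.frontier_eq]
  refine ⟨hxS, ?_⟩
  have hcompl : FA A ⊆ closure ((· + colSum A S) '' cuboid A)ᶜ :=
    closure_mono fun y hy hyS => hy.2 (Set.mem_iUnion₂.mpr ⟨S, hS, hyS⟩)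
  rw [closure_compl] at hcompl
  exact hcompl hxF

lemma volume_frontier_image_add_cuboid (A : Matrix (Fin n) (Fin n) ℝ) (c : Fin n → ℝ) :
    volume (frontier ((· + c) '' cuboid A)) = 0 := by
  rw [image_add_cuboid]
  exact (convex_pi fun _ _ => convex_Icc _ _).addHaar_frontier volume

lemma colSum_insert (A : Matrix (Fin n) (Fin n) ℝ) {S : Finset (Fin n)} {j : Fin n} (hj : j ∉ S)
    (i : Fin n) : colSum A (insert j S) i = A i j + colSum A S i :=
  sum_insert hj

section ZMatrix

variable {A : Matrix (Fin n) (Fin n) ℝ} (hoff : ∀ i j, i ≠ j → A i j ≤ 0)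
include hoff

lemma colSum_nonpos_of_notMem {S : Finset (Fin n)} {i : Fin n} (hi : i ∉ S) :
    colSum A S i ≤ 0 :=
  sum_nonpos fun j hj => hoff i j (ne_of_mem_of_not_mem hj hi).symm

lemma sum_row_le_colSum {S : Finset (Fin n)} {i : Fin n} (hi : i ∈ S) :
    ∑ j, A i j ≤ colSum A S i := by
  rw [← sum_add_sum_compl S]
  have : ∑ j ∈ Sᶜ, A i j ≤ 0 := colSum_nonpos_of_notMem hoff (notMem_compl.mpr hi)
  unfold colSum
  linarith

/-- For `i ∈ T` the upper bound `x i ≤ A i i + colSum A T i` and for `i ∉ T` the lower bound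
`colSum A T i ≤ x i` are automatic, so these are the bounds that make `x ∈ C_A + A 1_T`. Adding a
violating `j` keeps the lower bounds, since the off-diagonal entries are nonpositive. -/
lemma exists_superset_lower_upper (x : Fin n → ℝ) (S : Finset (Fin n))
    (hS : ∀ i ∈ S, colSum A S i ≤ x i) :
    ∃ T, S ⊆ T ∧ (∀ i ∈ T, colSum A T i ≤ x i) ∧ ∀ i ∉ T, x i ≤ A i i + colSum A T i := by
  by_cases hup : ∀ i ∉ S, x i ≤ A i i + colSum A S i
  · exact ⟨S, subset_rfl, hS, hup⟩
  push Not at hup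
  obtain ⟨j, hjS, hj⟩ := hup
  have hins : ∀ i ∈ insert j S, colSum A (insert j S) i ≤ x i := by
    intro i hi
    rw [colSum_insert A hjS]
    rcases mem_insert.mp hi with rfl | hi
    · exact hj.le
    · linarith [hoff i j (ne_of_mem_of_not_mem hi hjS), hS i hi]
  obtain ⟨T, hST, hT⟩ := exists_superset_lower_upper x (insert j S) hins
  exact ⟨T, (subset_insert j S).trans hST, hT⟩
termination_by Sᶜ.card
decreasing_by
  rw [compl_insert]
  exact card_erase_lt_of_mem (mem_compl.mpr hjS)

variable (hrow : ∀ i, 0 ≤ ∑ j, A i j)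
include hrow

/-- Such a `v` takes only the values `m - 1` and `m ≥ 1`, so `A v` is `colSum A S₀`, with
`S₀ = {v = m}`, plus `m - 1` times the nonnegative row sums. -/
lemma exists_mem_image_add_cuboid_of_nonneg {x : Fin n → ℝ} (hx : x ∈ cuboid A)
    {v : Fin n → ℤ} (hv0 : 0 ≤ v) (hv : v ≠ 0) (hspread : ∀ i j, v i - v j ≤ 1)
    (hAv : (A *ᵥ fun j => (v j : ℝ)) ≤ x) :
    ∃ S : Finset (Fin n), S.Nonempty ∧ x ∈ (· + colSum A S) '' cuboid A := by
  classical
  obtain ⟨q, hq⟩ := Function.ne_iff.mp hv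
  obtain ⟨p, -, hp⟩ := univ.exists_max_image v ⟨q, mem_univ q⟩
  set S₀ := univ.filter fun i => v i = v p
  have hvp : 1 ≤ v p := by
    have h₀ : 0 ≤ v q := hv0 q
    have h₁ : v q ≠ 0 := hq
    have := hp q (mem_univ q)
    omega
  have hvals : ∀ j, (v j : ℝ) = ((v p - 1 : ℤ) : ℝ) + if j ∈ S₀ then 1 else 0 := by
    intro j
    have := hp j (mem_univ j); have := hspread p j
    by_cases hj : v j = v p
    · simp [S₀, hj]
    · simp [S₀, show v j = v p - 1 by omega]
  have hS₀ : ∀ i, colSum A S₀ i ≤ x i := by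
    intro i
    have hsplit :
        (A *ᵥ fun j => (v j : ℝ)) i = ((v p - 1 : ℤ) : ℝ) * ∑ j, A i j + colSum A S₀ i := by
      simp only [mulVec, dotProduct, hvals, mul_add, sum_add_distrib, mul_ite, mul_one, mul_zero,
        sum_ite_mem, univ_inter, ← sum_mul, colSum]
      ring
    have : (0 : ℝ) ≤ ((v p - 1 : ℤ) : ℝ) * ∑ j, A i j :=
      mul_nonneg (by exact_mod_cast (by omega : (0 : ℤ) ≤ v p - 1)) (hrow i)
    linarith [hAv i]
  obtain ⟨T, hS₀T, hlowT, hupT⟩ := exists_superset_lower_upper hoff x S₀ fun i _ => hS₀ i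
  refine ⟨T, ⟨p, hS₀T (by simp [S₀])⟩, mem_image_add_cuboid.mpr fun i => ?_⟩
  rw [mem_cuboid] at hx
  by_cases hi : i ∈ T
  · exact ⟨hlowT i hi, by linarith [(hx i).2, sum_row_le_colSum hoff hi, hrow i]⟩
  · exact ⟨(colSum_nonpos_of_notMem hoff hi).trans (hx i).1, hupT i hi⟩

/-- The case `v ≤ 0` is the case `v ≥ 0` applied to `-v` and the point `x - A v`. -/
lemma exists_mem_image_add_cuboid {x : Fin n → ℝ} (hx : x ∈ cuboid A) {v : Fin n → ℤ}
    (hv : v ≠ 0) (hspread : ∀ i j, v i - v j ≤ 1)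
    (hx' : x - (A *ᵥ fun j => (v j : ℝ)) ∈ cuboid A) :
    ∃ S : Finset (Fin n), S.Nonempty ∧ (x ∈ (· + colSum A S) '' cuboid A ∨
      x - (A *ᵥ fun j => (v j : ℝ)) ∈ (· + colSum A S) '' cuboid A) := by
  rw [mem_cuboid] at hx'
  by_cases hv0 : 0 ≤ v
  · obtain ⟨S, hS, hxS⟩ := exists_mem_image_add_cuboid_of_nonneg hoff hrow hx hv0 hv hspread
      fun i => by linarith [(hx' i).1, Pi.sub_apply x (A *ᵥ fun j => (v j : ℝ)) i]
    exact ⟨S, hS, Or.inl hxS⟩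
  · obtain ⟨i₀, hi₀⟩ : ∃ i₀, v i₀ < 0 := by simpa [Pi.le_def] using hv0
    have hneg : 0 ≤ -v := fun i => by
      have := hspread i i₀
      simp only [Pi.neg_apply, Pi.zero_apply]
      omega
    have hmulVec_neg : (A *ᵥ fun j => ((-v) j : ℝ)) = -(A *ᵥ fun j => (v j : ℝ)) := by
      rw [← mulVec_neg]; congr 1; ext j; simp
    obtain ⟨S, hS, hxS⟩ := exists_mem_image_add_cuboid_of_nonneg hoff hrow (mem_cuboid.mpr hx')
      hneg (neg_ne_zero.mpr hv) (fun i j => by simp only [Pi.neg_apply]; linarith [hspread j i])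
      (fun i => by rw [hmulVec_neg]; simp [(mem_cuboid.mp hx i).1])
    exact ⟨S, hS, Or.inr hxS⟩

end ZMatrix

lemma volume_FA_inter_image_add_eq_zero {A : Matrix (Fin n) (Fin n) ℝ}
    (hoff : ∀ i j, i ≠ j → A i j ≤ 0) (hrow : ∀ i, 0 ≤ ∑ j, A i j) {v : Fin n → ℤ}
    (hv : v ≠ 0) (hspread : ∀ i j, v i - v j ≤ 1) :
    volume (FA A ∩ (· + A *ᵥ fun j => (v j : ℝ)) '' FA A) = 0 := by
  set w := A *ᵥ fun j => (v j : ℝ)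
  have hcover : FA A ∩ (· + w) '' FA A ⊆ ⋃ S : Finset (Fin n),
      frontier ((· + colSum A S) '' cuboid A) ∪
        (· + w) '' frontier ((· + colSum A S) '' cuboid A) := by
    rintro _ ⟨hxF, y, hyF, rfl⟩
    have hyw : y + w - w = y := add_sub_cancel_right y w
    obtain ⟨S, hS, hxS | hyS⟩ := exists_mem_image_add_cuboid hoff hrow (FA_subset_cuboid A hxF) hv
      hspread (show y + w - w ∈ cuboid A by rw [hyw]; exact FA_subset_cuboid A hyF)
    · exact Set.mem_iUnion.mpr ⟨S, Or.inl (FA_inter_subset_frontier A hS ⟨hxF, hxS⟩)⟩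
    · rw [hyw] at hyS
      exact Set.mem_iUnion.mpr ⟨S, Or.inr ⟨y, FA_inter_subset_frontier A hS ⟨hyF, hyS⟩, rfl⟩⟩
  refine measure_mono_null hcover (measure_iUnion_null fun S => measure_union_null ?_ ?_)
  · exact volume_frontier_image_add_cuboid A _
  · rw [volume_image_add]; exact volume_frontier_image_add_cuboid A _

def bMatrix (n : ℕ) : Matrix (Fin n) (Fin n) ℝ :=
  ((n : ℝ) + 1) • (1 : Matrix (Fin n) (Fin n) ℝ) - Matrix.of fun _ _ => (1 : ℝ)

lemma bMatrix_apply (i j : Fin n) : bMatrix n i j = if i = j then (n : ℝ) else -1 := by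
  by_cases h : i = j <;> simp [bMatrix, one_apply, h]

lemma bMatrix_mulVec_apply (u : Fin n → ℝ) (i : Fin n) :
    (bMatrix n *ᵥ u) i = (n + 1) * u i - ∑ j, u j := by
  simp [bMatrix, mulVec, dotProduct, one_apply, sub_mul, sum_sub_distrib, ite_mul]

lemma abs_le_abs_bMatrix_mulVec {u : Fin n → ℝ} {p : Fin n} (hp : ∀ j, |u j| ≤ |u p|) :
    |u p| ≤ |(bMatrix n *ᵥ u) p| := by
  have hsum : |∑ j, u j| ≤ n * |u p| :=
    calc |∑ j, u j| ≤ ∑ j, |u j| := abs_sum_le_sum_abs _ _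
      _ ≤ ∑ _j : Fin n, |u p| := sum_le_sum fun j _ => hp j
      _ = n * |u p| := by simp
  have := abs_sub_abs_le_abs_sub ((n + 1) * u p) (∑ j, u j)
  rw [abs_mul, abs_of_pos (by positivity : (0 : ℝ) < n + 1)] at this
  rw [bMatrix_mulVec_apply]
  linarith

lemma abs_mulVec_le {ι κ : Type*} [Fintype κ] (E : Matrix ι κ ℝ) {ε M : ℝ}
    (hE : ∀ i j, |E i j| ≤ ε) {u : κ → ℝ} (hu : ∀ j, |u j| ≤ M) (i : ι) :
    |(E *ᵥ u) i| ≤ Fintype.card κ * (ε * M) :=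
  calc |∑ j, E i j * u j| ≤ ∑ j, |E i j * u j| := abs_sum_le_sum_abs _ _
    _ ≤ ∑ _j : κ, ε * M := sum_le_sum fun j _ => by
        rw [abs_mul]
        exact mul_le_mul (hE i j) (hu j) (abs_nonneg _) ((abs_nonneg _).trans (hE i j))
    _ = Fintype.card κ * (ε * M) := by simp

section NearB

-- `hε` gives `n ε ≤ 1 / 4`, which bounds solutions of `|A u| ≤ diag A` by `|u| ≤ 2 n`, and
-- `(2 + 4 n ^ 2) ε ≤ 1`, which then gives `(n + 1) |u i - u j| < 2 n + 2`.
variable {A : Matrix (Fin n) (Fin n) ℝ} {ε : ℝ} (hA : ∀ i j, |A i j - bMatrix n i j| < ε)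
  (hε : (4 * n ^ 2 + 4) * ε ≤ 1)
include hA hε

lemma offDiag_nonpos_of_near (i j : Fin n) (hij : i ≠ j) : A i j ≤ 0 := by
  have h := abs_lt.mp (hA i j)
  rw [bMatrix_apply, if_neg hij] at h
  nlinarith [sq_nonneg (n : ℝ)]

lemma sum_row_nonneg_of_near (i : Fin n) : 0 ≤ ∑ j, A i j := by
  have hε0 : 0 ≤ ε := (abs_nonneg _).trans (hA i i).le
  have hB : (bMatrix n *ᵥ fun _ => 1) i = 1 := by simp [bMatrix_mulVec_apply]
  have hE := abs_mulVec_le (A - bMatrix n) (fun i j => (hA i j).le)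
    (u := fun _ => 1) (M := 1) (fun _ => by simp) i
  have hsplit : ∑ j, A i j = (bMatrix n *ᵥ fun _ => 1) i + ((A - bMatrix n) *ᵥ fun _ => 1) i := by
    simp [mulVec, dotProduct]
  simp only [Fintype.card_fin, mul_one] at hE
  rw [hsplit, hB]
  nlinarith [(abs_le.mp hE).1, sq_nonneg ((n : ℝ) - 1)]

variable {u : Fin n → ℝ} (hAu : ∀ i, |(A *ᵥ u) i| ≤ A i i)
include hAu

lemma abs_le_two_mul_of_near (j : Fin n) : |u j| ≤ 2 * n := by
  obtain ⟨p, -, hp⟩ := univ.exists_max_image (fun k => |u k|) ⟨j, mem_univ j⟩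
  have hM := abs_le_abs_bMatrix_mulVec fun k => hp k (mem_univ k)
  have hE := abs_mulVec_le (A - bMatrix n) (fun i j => (hA i j).le) (fun k => hp k (mem_univ k)) p
  have hdiag := (abs_lt.mp (hA p p)).2
  rw [bMatrix_apply, if_pos rfl] at hdiag
  have hsplit : (bMatrix n *ᵥ u) p = (A *ᵥ u) p - ((A - bMatrix n) *ᵥ u) p := by simp [sub_mulVec]
  rw [hsplit] at hM
  simp only [Fintype.card_fin] at hE
  have hn : (1 : ℝ) ≤ n := by exact_mod_cast j.pos
  have hε0 : 0 ≤ ε := (abs_nonneg _).trans (hA j j).le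
  have hnε : n * ε ≤ 1 / 4 := by nlinarith [mul_nonneg (sq_nonneg ((n : ℝ) - 1)) hε0]
  have hε4 : ε ≤ 1 / 4 := by nlinarith [mul_nonneg (sq_nonneg (n : ℝ)) hε0]
  have := abs_sub ((A *ᵥ u) p) (((A - bMatrix n) *ᵥ u) p)
  refine (hp j (mem_univ j)).trans ?_
  nlinarith [hAu p, mul_le_mul_of_nonneg_right hnε (abs_nonneg (u p))]

lemma abs_sub_lt_two_of_near (i j : Fin n) : |u i - u j| < 2 := by
  have hE := abs_mulVec_le (A - bMatrix n) (fun i j => (hA i j).le)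
    (abs_le_two_mul_of_near hA hε hAu)
  simp only [Fintype.card_fin] at hE
  have hsplit : ∀ k, (bMatrix n *ᵥ u) k = (A *ᵥ u) k - ((A - bMatrix n) *ᵥ u) k := fun k => by
    simp [sub_mulVec]
  have hdiag : ∀ k, A k k < n + ε := fun k => by
    have := (abs_lt.mp (hA k k)).2
    rw [bMatrix_apply, if_pos rfl] at this
    linarith
  have hε0 : 0 ≤ ε := (abs_nonneg _).trans (hA i i).le
  have hpos : (0 : ℝ) < n + 1 := by positivity
  have key : (n + 1) * |u i - u j| ≤ |(A *ᵥ u) i| + |((A - bMatrix n) *ᵥ u) i| +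
      (|(A *ᵥ u) j| + |((A - bMatrix n) *ᵥ u) j|) := by
    rw [← abs_of_pos hpos, ← abs_mul,
      show (n + 1) * (u i - u j) = (bMatrix n *ᵥ u) i - (bMatrix n *ᵥ u) j by
        simp only [bMatrix_mulVec_apply]; ring, hsplit, hsplit]
    exact (abs_sub _ _).trans (add_le_add (abs_sub _ _) (abs_sub _ _))
  refine lt_of_mul_lt_mul_left ?_ hpos.le
  nlinarith [hAu i, hAu j, hdiag i, hdiag j, hE i, hE j]

end NearB

lemma volume_FA_inter_image_add_eq_zero_of_near {A : Matrix (Fin n) (Fin n) ℝ} {ε : ℝ}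
    (hA : ∀ i j, |A i j - bMatrix n i j| < ε) (hε : (4 * n ^ 2 + 4) * ε ≤ 1)
    {v : Fin n → ℤ} (hv : v ≠ 0) :
    volume (FA A ∩ (· + A *ᵥ fun j => (v j : ℝ)) '' FA A) = 0 := by
  rcases (FA A ∩ (· + A *ᵥ fun j => (v j : ℝ)) '' FA A).eq_empty_or_nonempty with h | h
  · rw [h, measure_empty]
  obtain ⟨_, hxF, y, hyF, rfl⟩ := h
  have hAv := abs_le_diag_of_mem_cuboid (FA_subset_cuboid A hyF) (FA_subset_cuboid A hxF)
  refine volume_FA_inter_image_add_eq_zero (offDiag_nonpos_of_near hA hε)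
    (sum_row_nonneg_of_near hA hε) hv fun i j => ?_
  have hreal : |((v i - v j : ℤ) : ℝ)| < 2 := by
    push_cast
    exact abs_sub_lt_two_of_near hA hε hAv i j
  have := abs_lt.mp (by exact_mod_cast hreal : |v i - v j| < 2)
  omega

theorem FA_translates_ae_disjoint_near_B_general (n : ℕ)
    (B : Matrix (Fin n) (Fin n) ℝ)
    (hB : B = ((n : ℝ) + 1) • (1 : Matrix (Fin n) (Fin n) ℝ) - Matrix.of fun _ _ => (1 : ℝ)) :
    ∃ ε > (0 : ℝ), ∀ A : Matrix (Fin n) (Fin n) ℝ,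
      (∀ i j, |A i j - B i j| < ε) →
      ∀ y ∈ latticeOf A, ∀ z ∈ latticeOf A, y ≠ z →
        MeasureTheory.volume
          (((fun x => x + y) '' FA A) ∩ ((fun x => x + z) '' FA A)) = 0 := by
  refine ⟨1 / (4 * n ^ 2 + 4), by positivity, fun A hA y hy z hz hyz => ?_⟩
  subst hB
  have hε : (4 * (n : ℝ) ^ 2 + 4) * (1 / (4 * n ^ 2 + 4)) ≤ 1 := by
    rw [mul_one_div_cancel (by positivity)]
  obtain ⟨vy, rfl⟩ := hy
  obtain ⟨vz, rfl⟩ := hz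
  have hv : vz - vy ≠ 0 := sub_ne_zero.mpr fun h => hyz (h ▸ rfl)
  have hw : (A *ᵥ fun j => ((vz - vy) j : ℝ)) =
      (A *ᵥ fun j => (vz j : ℝ)) - A *ᵥ fun j => (vy j : ℝ) := by
    rw [← mulVec_sub]; congr 1; ext j; simp
  rw [image_add_inter_image_add, volume_image_add, ← hw]
  exact volume_FA_inter_image_add_eq_zero_of_near hA hε hv

/-- Near the matrix `B = (n+1)I - J`, distinct lattice translates of `F_A` overlap
only in a set of measure zero. -/
theorem FA_translates_ae_disjoint_near_B (n : ℕ) (hn : 0 < n)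
    (B : Matrix (Fin n) (Fin n) ℝ)
    (hB : B = ((n : ℝ) + 1) • (1 : Matrix (Fin n) (Fin n) ℝ) - Matrix.of fun _ _ => (1 : ℝ)) :
    ∃ ε > (0 : ℝ), ∀ A : Matrix (Fin n) (Fin n) ℝ,
      (∀ i j, |A i j - B i j| < ε) →
      ∀ y ∈ latticeOf A, ∀ z ∈ latticeOf A, y ≠ z →
        MeasureTheory.volume
          (((fun x => x + y) '' FA A) ∩ ((fun x => x + z) '' FA A)) = 0 :=
  FA_translates_ae_disjoint_near_B_general n B hB
end

section
/- Let n be a positive integer and let A be a real n × n matrix such that every diagonal entry a_{i,i} is strictly positive, every off-diagonal entry a_{i,j} (i ≠ j) is strictly negative, and every row sum Σ_{j=1}^n a_{i,j} is strictly positive. Then the translates of F_A by the lattice Λ_A cover all of ℝ^n: ⋃_{z ∈ Λ_A} (F_A + z) = ℝ^n. -/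
/-!
Given `x`, among the integer vectors `v` with `A v ≤ x` (componentwise) choose one with
the largest coordinate sum; such `v` exist, and their coordinate sums are bounded, because
`A` has nonpositive off-diagonal entries and positive row sums. Then `x - A v` lies in
`C_A` minus its translates: were `x - A v ∈ C_A + A 1_S` for a nonempty `S`, or
`x_i - (A v)_i > a_{i,i}`, then `v + 1_S`, resp. `v + e_i`, would still satisfy
`A w ≤ x` and have a larger coordinate sum.
-/

open Finset Matrix

namespace Matrix

variable {ι : Type*} [Fintype ι] (A : Matrix ι ι ℝ)

theorem mul_sum_row_le_mulVec_of_forall_le (hoff : ∀ i j, i ≠ j → A i j ≤ 0)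
    (v : ι → ℝ) {j : ι} (hj : ∀ k, v k ≤ v j) : v j * ∑ k, A j k ≤ (A *ᵥ v) j := by
  rw [mul_sum, mulVec, dotProduct]
  refine sum_le_sum fun k _ => ?_
  rw [mul_comm]
  rcases eq_or_ne j k with rfl | hjk
  · exact le_rfl
  · exact mul_le_mul_of_nonpos_left (hj k) (hoff j k hjk)

theorem le_sum_abs_div_of_mulVec_le (hoff : ∀ i j, i ≠ j → A i j ≤ 0)
    (hrow : ∀ i, 0 < ∑ k, A i k) {v x : ι → ℝ} (h : A *ᵥ v ≤ x) (j : ι) :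
    v j ≤ ∑ i, |x i| / ∑ k, A i k := by
  obtain ⟨j₀, -, hj₀⟩ := exists_max_image univ v ⟨j, mem_univ j⟩
  calc v j ≤ v j₀ := hj₀ j (mem_univ j)
    _ ≤ |x j₀| / ∑ k, A j₀ k := by
      rw [le_div_iff₀ (hrow j₀)]
      exact (A.mul_sum_row_le_mulVec_of_forall_le hoff v fun k => hj₀ k (mem_univ k)).trans
        ((h j₀).trans (le_abs_self _))
    _ ≤ ∑ i, |x i| / ∑ k, A i k :=
      single_le_sum (fun i _ => div_nonneg (abs_nonneg _) (hrow i).le) (mem_univ j₀)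

theorem mulVec_const_neg_le (hrow : ∀ i, 0 < ∑ k, A i k) (x : ι → ℝ) {t : ℝ}
    (ht : ∑ i, |x i| / ∑ k, A i k ≤ t) : A *ᵥ (fun _ => -t) ≤ x := by
  intro i
  have hi : |x i| / ∑ k, A i k ≤ t :=
    (single_le_sum (fun k _ => div_nonneg (abs_nonneg (x k)) (hrow k).le) (mem_univ i)).trans ht
  rw [div_le_iff₀ (hrow i)] at hi
  have hconst : (A *ᵥ fun _ => -t) i = -(t * ∑ k, A i k) := by
    simp only [mulVec, dotProduct, mul_neg, sum_neg_distrib, mul_sum, mul_comm]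
  rw [hconst]
  linarith [neg_abs_le (x i)]

theorem exists_int_mulVec_le_forall_sum_le (hoff : ∀ i j, i ≠ j → A i j ≤ 0)
    (hrow : ∀ i, 0 < ∑ k, A i k) (x : ι → ℝ) :
    ∃ v : ι → ℤ, A *ᵥ (fun j => (v j : ℝ)) ≤ x ∧
      ∀ w : ι → ℤ, A *ᵥ (fun j => (w j : ℝ)) ≤ x → ∑ j, w j ≤ ∑ j, v j := by
  set c := ∑ i, |x i| / ∑ k, A i k
  have hbdd : ∀ w : ι → ℤ, A *ᵥ (fun j => (w j : ℝ)) ≤ x →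
      ∑ j, w j ≤ Fintype.card ι * ⌊c⌋ := fun w hw => by
    calc ∑ j, w j ≤ ∑ _j : ι, ⌊c⌋ :=
          sum_le_sum fun j _ => Int.le_floor.2 (A.le_sum_abs_div_of_mulVec_le hoff hrow hw j)
      _ = Fintype.card ι * ⌊c⌋ := by simp
  have hstart : A *ᵥ (fun _ => ((-⌈c⌉ : ℤ) : ℝ)) ≤ x := by
    simpa using A.mulVec_const_neg_le hrow x (Int.le_ceil c)
  obtain ⟨_, ⟨v, hv, rfl⟩, hmax⟩ := Int.exists_greatest_of_bdd
    (P := fun s => ∃ w : ι → ℤ, A *ᵥ (fun j => (w j : ℝ)) ≤ x ∧ ∑ j, w j = s)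
    ⟨_, by rintro _ ⟨w, hw, rfl⟩; exact hbdd w hw⟩ ⟨_, _, hstart, rfl⟩
  exact ⟨v, hv, fun w hw => hmax _ ⟨w, hw, rfl⟩⟩

theorem mulVec_intCast_add_indicator [DecidableEq ι] (v : ι → ℤ) (S : Finset ι) :
    A *ᵥ (fun j => ((v j + if j ∈ S then 1 else 0 : ℤ) : ℝ)) =
      A *ᵥ (fun j => (v j : ℝ)) + fun r => ∑ i ∈ S, A r i := by
  ext r
  simp [mulVec, dotProduct, mul_add, sum_add_distrib, sum_ite_mem]

end Matrix

theorem sub_mulVec_mem_cuboid_diff {n : ℕ} (A : Matrix (Fin n) (Fin n) ℝ)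
    (hoff : ∀ i j, i ≠ j → A i j ≤ 0) {x : Fin n → ℝ} {v : Fin n → ℤ}
    (hv : A *ᵥ (fun j => (v j : ℝ)) ≤ x)
    (hmax : ∀ w : Fin n → ℤ, A *ᵥ (fun j => (w j : ℝ)) ≤ x → ∑ j, w j ≤ ∑ j, v j) :
    x - A *ᵥ (fun j => (v j : ℝ)) ∈ cuboid A \ ⋃ (S : Finset (Fin n)) (_ : S.Nonempty),
      (fun x : Fin n → ℝ => x + fun r => ∑ i ∈ S, A r i) '' cuboid A := by
  have hstep : ∀ S : Finset (Fin n), S.Nonempty →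
      ¬ A *ᵥ (fun j => (v j : ℝ)) + (fun r => ∑ i ∈ S, A r i) ≤ x := by
    intro S hS hle
    have hsum := hmax (fun j => v j + if j ∈ S then 1 else 0)
      (by rwa [A.mulVec_intCast_add_indicator])
    simp only [sum_add_distrib, sum_boole, filter_mem_eq_inter, univ_inter] at hsum
    have := hS.card_pos
    omega
  refine ⟨fun i _ => ⟨sub_nonneg.2 (hv i), ?_⟩, ?_⟩
  · refine le_of_not_gt fun hi => hstep {i} (singleton_nonempty i) fun r => ?_
    simp only [Pi.add_apply, sum_singleton]
    rcases eq_or_ne r i with rfl | hri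
    · simp only [Pi.sub_apply] at hi
      linarith
    · linarith [hoff r i hri, hv r]
  · simp only [Set.mem_iUnion, Set.mem_image, not_exists, not_and]
    intro S hS c hc hcx
    refine hstep S hS fun r => ?_
    have hr := congrFun hcx r
    simp only [Pi.add_apply, Pi.sub_apply] at hr ⊢
    linarith [(hc r (Set.mem_univ r)).1]

theorem FA_translates_cover_general (n : ℕ) (A : Matrix (Fin n) (Fin n) ℝ)
    (hoff : ∀ i j, i ≠ j → A i j < 0)
    (hrow : ∀ i, 0 < ∑ j, A i j) :
    ⋃ z ∈ latticeOf A, (fun x => x + z) '' FA A = Set.univ := by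
  have hoff' : ∀ i j, i ≠ j → A i j ≤ 0 := fun i j h => (hoff i j h).le
  refine Set.eq_univ_of_forall fun x => ?_
  obtain ⟨v, hv, hmax⟩ := A.exists_int_mulVec_le_forall_sum_le hoff' hrow x
  exact Set.mem_iUnion₂.2 ⟨_, ⟨v, rfl⟩, _,
    subset_closure (sub_mulVec_mem_cuboid_diff A hoff' hv hmax), sub_add_cancel _ _⟩

/-- If `A` has positive diagonal, negative off-diagonal entries, and positive row sums,
then the lattice translates of `F_A` cover all of `ℝⁿ`. -/
theorem FA_translates_cover (n : ℕ) (hn : 0 < n) (A : Matrix (Fin n) (Fin n) ℝ)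
    (hdiag : ∀ i, 0 < A i i) (hoff : ∀ i j, i ≠ j → A i j < 0)
    (hrow : ∀ i, 0 < ∑ j, A i j) :
    ⋃ z ∈ latticeOf A, (fun x => x + z) '' FA A = Set.univ :=
  FA_translates_cover_general n A hoff hrow
end
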